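/- arXiv:1409.3020 — 8 statements merged into one kernel-verified Lean document; each statement's English description precedes it below -/
import Mathlib

section
/- Let F be a field, A an m×m matrix, B an n×n matrix, and S an m×n matrix over F, and let E be an extension field of F containing the eigenvalues of A and B. If there exist a nonzero row vector u ∈ E^{1×m} with uA = αu for some eigenvalue α of A, and a nonzero column vector v ∈ E^n with Bv = βv for some eigenvalue β of B, such that uSv = 0, then the F-linear span of {A^i S B^j : i, j ≥ 0} is a proper subspace of F^{m×n}. -/
/-!
Pairing with a left eigenvector `u` of `A` and a right eigenvector `v` of `B` gives the
`F`-linear functional `M ↦ u M v` on `F^{m×n}`, which sends `A^i S B^j` to `α^i β^j (u S v) = 0`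
and therefore kills the whole span. It is nonzero, since on the matrix unit `single k l 1` it
takes the value `u k * v l`, and a proper kernel cannot contain everything.
-/

open Matrix

namespace Matrix

variable {m n R : Type*} [Fintype m] [Fintype n] [DecidableEq m] [DecidableEq n]
  [CommSemiring R]

theorem vecMul_pow_of_vecMul_eq_smul {A : Matrix m m R} {u : m → R} {α : R}
    (h : u ᵥ* A = α • u) (i : ℕ) : u ᵥ* (A ^ i) = α ^ i • u := by
  induction i with
  | zero => simp
  | succ i ih => rw [pow_succ, ← vecMul_vecMul, ih, smul_vecMul, h, smul_smul, pow_succ]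

theorem pow_mulVec_of_mulVec_eq_smul {B : Matrix n n R} {v : n → R} {β : R}
    (h : B *ᵥ v = β • v) (j : ℕ) : (B ^ j) *ᵥ v = β ^ j • v := by
  induction j with
  | zero => simp
  | succ j ih => rw [pow_succ', ← mulVec_mulVec, ih, mulVec_smul, h, smul_smul, pow_succ]

theorem dotProduct_pow_mul_mul_pow_mulVec {A : Matrix m m R} {B : Matrix n n R}
    {u : m → R} {v : n → R} {α β : R} (huA : u ᵥ* A = α • u) (hBv : B *ᵥ v = β • v)
    (S : Matrix m n R) (i j : ℕ) :
    u ⬝ᵥ (A ^ i * S * B ^ j) *ᵥ v = α ^ i * β ^ j * (u ⬝ᵥ S *ᵥ v) := by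
  rw [Matrix.mul_assoc, ← mulVec_mulVec, ← mulVec_mulVec, pow_mulVec_of_mulVec_eq_smul hBv,
    dotProduct_mulVec, vecMul_pow_of_vecMul_eq_smul huA, mulVec_smul, smul_dotProduct,
    dotProduct_smul, smul_smul, smul_eq_mul]

end Matrix

section Sandwich

variable {F E m n : Type*} [CommSemiring F] [CommSemiring E] [Algebra F E] [Fintype m]
  [Fintype n]

def sandwich (u : m → E) (v : n → E) : Matrix m n F →ₗ[F] E where
  toFun M := u ⬝ᵥ M.map (algebraMap F E) *ᵥ v
  map_add' M N := by
    rw [Matrix.map_add _ (map_add _), add_mulVec, dotProduct_add]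
  map_smul' c M := by
    rw [Matrix.map_smul (algebraMap F E) c ((Algebra.linearMap F E).map_smul c),
      smul_mulVec, dotProduct_smul, RingHom.id_apply]

theorem sandwich_apply (u : m → E) (v : n → E) (M : Matrix m n F) :
    sandwich u v M = u ⬝ᵥ M.map (algebraMap F E) *ᵥ v :=
  rfl

theorem sandwich_single [DecidableEq m] [DecidableEq n] (u : m → E) (v : n → E) (k : m)
    (l : n) : sandwich u v (single k l (1 : F)) = u k * v l := by
  rw [sandwich_apply, map_single _ _ _ (algebraMap F E), map_one, single_mulVec, one_mul]
  exact dotProduct_single u (v l) k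

theorem sandwich_ne_zero [NoZeroDivisors E] [DecidableEq m] [DecidableEq n] {u : m → E}
    {v : n → E} (hu : u ≠ 0) (hv : v ≠ 0) : sandwich (F := F) u v ≠ 0 := by
  obtain ⟨k, hk⟩ := Function.ne_iff.mp hu
  obtain ⟨l, hl⟩ := Function.ne_iff.mp hv
  intro h
  have hkl := sandwich_single (F := F) u v k l
  rw [h, LinearMap.zero_apply] at hkl
  exact mul_ne_zero hk hl hkl.symm

end Sandwich

/-- If some left eigenvector u of A and right eigenvector v of B (over an
extension field E) satisfy uSv = 0, then the span of {A^i S B^j} is a proper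
subspace of the matrix space. -/
theorem span_ne_top_of_eigen_orthogonal
    {F E : Type*} [Field F] [Field E] [Algebra F E] {m n : ℕ}
    (A : Matrix (Fin m) (Fin m) F) (B : Matrix (Fin n) (Fin n) F)
    (S : Matrix (Fin m) (Fin n) F)
    (u : Fin m → E) (α : E) (v : Fin n → E) (β : E)
    (hu : u ≠ 0) (huA : Matrix.vecMul u (A.map (algebraMap F E)) = α • u)
    (hv : v ≠ 0) (hBv : Matrix.mulVec (B.map (algebraMap F E)) v = β • v)
    (huSv : dotProduct u (Matrix.mulVec (S.map (algebraMap F E)) v) = 0) :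
    Submodule.span F {M : Matrix (Fin m) (Fin n) F | ∃ i j : ℕ, M = A ^ i * S * B ^ j} ≠ ⊤ := by
  have hspan : Submodule.span F {M | ∃ i j : ℕ, M = A ^ i * S * B ^ j} ≤
      LinearMap.ker (sandwich u v) := by
    rw [Submodule.span_le]
    rintro _ ⟨i, j, rfl⟩
    rw [SetLike.mem_coe, LinearMap.mem_ker, sandwich_apply, Matrix.map_mul, Matrix.map_mul,
      Matrix.map_pow, Matrix.map_pow, dotProduct_pow_mul_mul_pow_mulVec huA hBv, huSv, mul_zero]
  intro htop
  rw [htop, top_le_iff, LinearMap.ker_eq_top] at hspan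
  exact sandwich_ne_zero hu hv hspan
end

section
/- Let F be a field, H ∈ F^{p×p}, K ∈ F^{p×q}, and let E be an extension field of F containing all eigenvalues of H. Then for any integer d greater than or equal to the degree of the minimal polynomial of H, the block matrix [K, HK, …, H^{d−1}K] has rank p over F if and only if for every eigenvalue λ of H (in E), the matrix [λI − H, K] has rank p over E. -/
/-!
The rows of a matrix are independent iff no nonzero row vector `w` annihilates it. For the
controllability matrix this means `w Aʲ B = 0` for `j < d`, and since `d ≥ deg μ_A` every power
`Aʲ` is a combination of these, so `w` lies in the subspace `{w | ∀ j, w Aʲ B = 0}`. That subspace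
is invariant under `w ↦ w A`; as the characteristic polynomial splits, a nonzero invariant subspace
contains a left eigenvector `w A = μ w`; together with `w B = 0` (the case `j = 0`) this says that
`w` kills the Hautus matrix `[μ I - A, B]`. Conversely a left eigenvector killing `B` kills every
`Aʲ B`. Passing from `F` to `E` is harmless because linear independence of rows survives field
extension.
-/

open Matrix Polynomial

theorem Polynomial.Monic.pow_mem_span_pow_lt_natDegree {R S : Type*} [CommRing R] [Ring S]
    [Algebra R S] {P : R[X]} (hP : P.Monic) {a : S} (ha : aeval a P = 0) (j : ℕ) :
    a ^ j ∈ Submodule.span R ((a ^ ·) '' Set.Iio P.natDegree) := by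
  by_cases hP1 : P = 1
  · have : Subsingleton S := subsingleton_of_zero_eq_one (by simpa [hP1] using ha.symm)
    simp [Subsingleton.elim (a ^ j) 0]
  rw [← aeval_X_pow (R := R), ← aeval_modByMonic_eq_self_of_root ha,
    aeval_eq_sum_range' (natDegree_modByMonic_lt _ hP hP1)]
  exact Submodule.sum_mem _ fun i hi ↦
    Submodule.smul_mem _ _ (Submodule.subset_span ⟨i, Finset.mem_range.mp hi, rfl⟩)

namespace Module.End

variable {K V : Type*} [Field K] [AddCommGroup V] [Module K V]

theorem aeval_restrict_apply (f : End K V) {W : Submodule K V} (hW : ∀ x ∈ W, f x ∈ W)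
    (P : K[X]) (w : W) : (aeval (f.restrict hW) P w : V) = aeval f P w := by
  induction P using Polynomial.induction_on' with
  | add P Q hP hQ => simp [hP, hQ]
  | monomial n a => simp [pow_restrict n hW, LinearMap.restrict_apply]

theorem exists_hasEigenvector_mem_of_charpoly_splits [FiniteDimensional K V] {f : End K V}
    (hf : f.charpoly.Splits) {W : Submodule K V} (hW : ∀ x ∈ W, f x ∈ W) (hW0 : W ≠ ⊥) :
    ∃ μ, ∃ w ∈ W, f.HasEigenvector μ w := by
  have : Nontrivial W := Submodule.nontrivial_iff_ne_bot.mpr hW0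
  set g := f.restrict hW
  have hg : aeval g f.charpoly = 0 := LinearMap.ext fun w ↦ Subtype.ext <| by
    rw [aeval_restrict_apply, LinearMap.aeval_self_charpoly]; rfl
  have hsplit : (minpoly K g).Splits :=
    hf.of_dvd f.charpoly_monic.ne_zero (minpoly.dvd K g hg)
  obtain ⟨μ, hμ⟩ := hsplit.exists_eval_eq_zero (minpoly.degree_pos (.of_finite K g)).ne'
  obtain ⟨w, hw⟩ := (hasEigenvalue_of_isRoot hμ).exists_hasEigenvector
  refine ⟨μ, w, w.2, mem_eigenspace_iff.mpr ?_, by simpa using hw.2⟩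
  exact congrArg Subtype.val (mem_eigenspace_iff.mp hw.1)

end Module.End

namespace Matrix

section Rank

variable {K : Type*} [Field K] {n ι : Type*} [Fintype n] [Fintype ι]

theorem rank_eq_card_iff_linearIndependent_row (M : Matrix n ι K) :
    M.rank = Fintype.card n ↔ LinearIndependent K M.row := by
  rw [rank_eq_finrank_span_row, ← Set.finrank, eq_comm, linearIndependent_iff_card_eq_finrank_span]

theorem rank_eq_card_iff_forall_vecMul_eq_zero (M : Matrix n ι K) :
    M.rank = Fintype.card n ↔ ∀ v : n → K, v ᵥ* M = 0 → v = 0 := by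
  rw [rank_eq_card_iff_linearIndependent_row, ← vecMul_injective_iff, ← coe_vecMulLinear,
    injective_iff_map_eq_zero]
  simp only [vecMulLinear_apply]

theorem rank_map_algebraMap_eq_card_iff {F : Type*} [Field F] [Algebra F K]
    (M : Matrix n ι F) :
    (M.map (algebraMap F K)).rank = Fintype.card n ↔ M.rank = Fintype.card n := by
  rw [rank_eq_card_iff_linearIndependent_row, rank_eq_card_iff_linearIndependent_row]
  exact linearIndependent_algebraMap_comp_iff

end Rank

section Controllability

variable {R : Type*} [CommRing R] {n m : Type*} [Fintype n] [DecidableEq n]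

def controllabilityMatrix (A : Matrix n n R) (B : Matrix n m R) (d : ℕ) :
    Matrix n (Fin d × m) R :=
  of fun i jk ↦ (A ^ (jk.1 : ℕ) * B) i jk.2

def hautusMatrix (A : Matrix n n R) (B : Matrix n m R) (μ : R) : Matrix n (n ⊕ m) R :=
  fromCols (μ • 1 - A) B

def controllabilityLeftKernel (A : Matrix n n R) (B : Matrix n m R) : Submodule R (n → R) :=
  ⨅ j : ℕ, LinearMap.ker (A ^ j * B).vecMulLinear

variable {A : Matrix n n R} {B : Matrix n m R} {v : n → R}

theorem controllabilityMatrix_map {S : Type*} [CommRing S] (f : R →+* S) (d : ℕ) :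
    (controllabilityMatrix A B d).map f = controllabilityMatrix (A.map f) (B.map f) d := by
  ext i jk
  simp [controllabilityMatrix, ← Matrix.map_pow, ← Matrix.map_mul]

theorem vecMul_controllabilityMatrix_eq_zero_iff {d : ℕ} :
    v ᵥ* controllabilityMatrix A B d = 0 ↔ ∀ j < d, v ᵥ* (A ^ j * B) = 0 := by
  simp only [funext_iff, Prod.forall, Fin.forall_iff, Pi.zero_apply]
  rfl

theorem vecMul_hautusMatrix_eq_zero_iff {μ : R} :
    v ᵥ* hautusMatrix A B μ = 0 ↔ v ᵥ* A = μ • v ∧ v ᵥ* B = 0 := by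
  rw [hautusMatrix, vecMul_fromCols, ← Sum.elim_zero_zero, Sum.elim_eq_iff, vecMul_sub, vecMul_smul,
    vecMul_one, sub_eq_zero, eq_comm]

theorem mem_controllabilityLeftKernel :
    v ∈ controllabilityLeftKernel A B ↔ ∀ j : ℕ, v ᵥ* (A ^ j * B) = 0 := by
  simp [controllabilityLeftKernel, Submodule.mem_iInf]

theorem vecMul_mem_controllabilityLeftKernel (hv : v ∈ controllabilityLeftKernel A B) :
    v ᵥ* A ∈ controllabilityLeftKernel A B := by
  rw [mem_controllabilityLeftKernel] at hv ⊢
  intro j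
  rw [vecMul_vecMul, ← Matrix.mul_assoc, ← pow_succ']
  exact hv (j + 1)

theorem mem_controllabilityLeftKernel_of_vecMul_eq_smul {μ : R} (hA : v ᵥ* A = μ • v)
    (hB : v ᵥ* B = 0) : v ∈ controllabilityLeftKernel A B := by
  rw [mem_controllabilityLeftKernel]
  intro j
  induction j with
  | zero => simpa using hB
  | succ j ih => rw [pow_succ', Matrix.mul_assoc, ← vecMul_vecMul, hA, smul_vecMul, ih, smul_zero]

end Controllability

section Field

variable {K : Type*} [Field K] {n m : Type*} [Fintype n] [DecidableEq n]
  {A : Matrix n n K} {B : Matrix n m K} {v : n → K}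

theorem mem_controllabilityLeftKernel_of_natDegree_minpoly_le {d : ℕ}
    (hd : (minpoly K A).natDegree ≤ d) (hv : ∀ j < d, v ᵥ* (A ^ j * B) = 0) :
    v ∈ controllabilityLeftKernel A B := by
  rw [mem_controllabilityLeftKernel]
  intro j
  have hspan := (minpoly.monic (IsIntegral.of_finite K A)).pow_mem_span_pow_lt_natDegree
    (minpoly.aeval K A) j
  refine Submodule.span_induction (p := fun X _ ↦ v ᵥ* (X * B) = 0) ?_ ?_ ?_ ?_ hspan
  · rintro _ ⟨i, hi, rfl⟩
    exact hv i (lt_of_lt_of_le hi hd)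
  · simp
  · intro X Y _ _ hX hY
    rw [Matrix.add_mul, vecMul_add, hX, hY, add_zero]
  · intro c X _ hX
    rw [Matrix.smul_mul, vecMul_smul, hX, smul_zero]

theorem rank_controllabilityMatrix_eq_card_iff [Fintype m] (B : Matrix n m K)
    (hA : A.charpoly.Splits) {d : ℕ} (hd : (minpoly K A).natDegree ≤ d) :
    (controllabilityMatrix A B d).rank = Fintype.card n ↔
      ∀ μ, A.charpoly.IsRoot μ → (hautusMatrix A B μ).rank = Fintype.card n := by
  simp only [rank_eq_card_iff_forall_vecMul_eq_zero, vecMul_controllabilityMatrix_eq_zero_iff,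
    vecMul_hautusMatrix_eq_zero_iff]
  constructor
  · rintro hctrb μ - v ⟨hvA, hvB⟩
    exact hctrb v fun j _ ↦
      mem_controllabilityLeftKernel.mp (mem_controllabilityLeftKernel_of_vecMul_eq_smul hvA hvB) j
  · intro hpbh v hv
    by_contra hv0
    -- Left eigenvectors of `A` are the eigenvectors of `toLin' Aᵀ`.
    have hchar : (toLin' Aᵀ).charpoly = A.charpoly := by
      rw [charpoly_toLin', charpoly_transpose]
    obtain ⟨μ, w, hwW, hw⟩ :=
      Module.End.exists_hasEigenvector_mem_of_charpoly_splits (hchar ▸ hA)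
        (fun x hx ↦ by simpa [mulVec_transpose] using vecMul_mem_controllabilityLeftKernel hx)
        ((Submodule.ne_bot_iff _).mpr
          ⟨v, mem_controllabilityLeftKernel_of_natDegree_minpoly_le hd hv, hv0⟩)
    have hroot : A.charpoly.IsRoot μ := by
      rw [← hchar, ← Module.End.hasEigenvalue_iff_isRoot_charpoly]
      exact Module.End.hasEigenvalue_of_hasEigenvector hw
    refine hw.2 (hpbh μ hroot w ⟨?_, ?_⟩)
    · simpa [mulVec_transpose] using Module.End.mem_eigenspace_iff.mp hw.1
    · simpa using mem_controllabilityLeftKernel.mp hwW 0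

theorem natDegree_minpoly_map_algebraMap_le {F : Type*} [Field F] [Algebra F K]
    (A : Matrix n n F) :
    (minpoly K (A.map (algebraMap F K))).natDegree ≤ (minpoly F A).natDegree := by
  have hF : minpoly F (A.map (algebraMap F K)) = minpoly F A :=
    minpoly.algHom_eq (Algebra.ofId F K).mapMatrix (map_injective (algebraMap F K).injective) A
  calc (minpoly K (A.map (algebraMap F K))).natDegree
      ≤ ((minpoly F A).map (algebraMap F K)).natDegree :=
        natDegree_le_of_dvd (hF ▸ minpoly.dvd_map_of_isScalarTower F K _)
          ((minpoly.monic (IsIntegral.of_finite F A)).map _).ne_zero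
    _ = (minpoly F A).natDegree := natDegree_map _

end Field

end Matrix

/-- Hautus-type lemma: for d ≥ deg μ_H, the controllability matrix
[K, HK, …, H^{d-1}K] has rank p over F iff [λI − H, K] has rank p over E
for every eigenvalue λ of H in E. -/
theorem rank_ctrb_eq_iff_rank_pbh
    {F E : Type*} [Field F] [Field E] [Algebra F E] {p q : ℕ}
    (H : Matrix (Fin p) (Fin p) F) (K : Matrix (Fin p) (Fin q) F)
    (hsplit : (H.charpoly.map (algebraMap F E)).Splits)
    (d : ℕ) (hd : (minpoly F H).natDegree ≤ d) :
    (Matrix.of fun (i : Fin p) (dq : Fin d × Fin q) =>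
        (H ^ (dq.1 : ℕ) * K) i dq.2).rank = p ↔
      ∀ lam : E, (Polynomial.aeval lam) H.charpoly = 0 →
        (Matrix.fromCols (lam • (1 : Matrix (Fin p) (Fin p) E) - H.map (algebraMap F E))
          (K.map (algebraMap F E))).rank = p := by
  have key := rank_controllabilityMatrix_eq_card_iff (K.map (algebraMap F E))
    (by rwa [charpoly_map]) ((natDegree_minpoly_map_algebraMap_le H).trans hd)
  rw [← controllabilityMatrix_map, rank_map_algebraMap_eq_card_iff] at key
  simp only [Fintype.card_fin, charpoly_map, IsRoot.def, eval_map_algebraMap] at key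
  exact key
end

section
/- Let F be a field and A, B ∈ F^{2×2}. The commutator [A,B] = AB − BA is invertible if and only if both of the following hold: (i) A and B are cyclic, and (ii) for every left eigenvector u of A and every right eigenvector v of B (over an extension field of F containing the eigenvalues of A and B), uv ≠ 0. -/
/-!
In dimension two, nonzero vectors `u` and `v` with `u ⬝ᵥ v = 0` determine each other up to
scalars, and `u` is a left eigenvector of `A` exactly when `v` is a right eigenvector of `A`
(both say that `u ⬝ᵥ A v = 0`). So condition (ii) fails iff `A` and `B` have a common eigenvector
over the algebraic closure, and such a vector lies in the kernel of `AB - BA`.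

Conversely, let `B` be non-scalar and `(AB - BA) v = 0` with `v ≠ 0`. If `B v = β v`, then `A v`
lies in the line `ker (B - β)`, so `v` is a common eigenvector. Otherwise Cayley–Hamilton gives
`(AB - BA) B = tr B • (AB - BA) - B (AB - BA)`, so `B v` is also in the kernel; as `v, B v` span,
`A` and `B` commute and share every eigenvector of `B`. Finally, a 2×2 matrix is cyclic iff it is
not scalar, and being scalar does not change under field extension.
-/

open Matrix Polynomial Module

theorem LinearMap.exists_smul_eq_of_mem_ker_of_finrank_eq_two {K V W : Type*} [Field K]
    [AddCommGroup V] [Module K V] [FiniteDimensional K V] [AddCommGroup W] [Module K W]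
    (hV : finrank K V = 2) {φ : V →ₗ[K] W} (hφ : φ ≠ 0) {v x : V} (hv : v ≠ 0)
    (hφv : φ v = 0) (hφx : φ x = 0) : ∃ t : K, t • v = x := by
  have hrange : 1 ≤ finrank K (LinearMap.range φ) :=
    Submodule.one_le_finrank_iff.mpr (LinearMap.range_eq_bot.not.mpr hφ)
  have hker : finrank K (LinearMap.ker φ) = 1 := by
    have hpos : 1 ≤ finrank K (LinearMap.ker φ) :=
      Submodule.one_le_finrank_iff.mpr fun h => hv (LinearMap.ker_eq_bot'.mp h v hφv)
    have := φ.finrank_range_add_finrank_ker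
    omega
  obtain ⟨t, ht⟩ := (finrank_eq_one_iff_of_nonzero' (⟨v, hφv⟩ : LinearMap.ker φ)
    (Subtype.coe_ne_coe.mp hv)).mp hker ⟨x, hφx⟩
  exact ⟨t, congrArg Subtype.val ht⟩

namespace Matrix

variable {K : Type*} [Field K]

theorem exists_smul_eq_of_mulVec_eq_zero {M : Matrix (Fin 2) (Fin 2) K} (hM : M ≠ 0)
    {v x : Fin 2 → K} (hv : v ≠ 0) (hMv : M *ᵥ v = 0) (hMx : M *ᵥ x = 0) :
    ∃ t : K, t • v = x :=
  LinearMap.exists_smul_eq_of_mem_ker_of_finrank_eq_two (φ := toLin' M) (by simp)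
    (toLin'.map_ne_zero_iff.mpr hM) hv hMv hMx

theorem exists_smul_eq_of_dotProduct_eq_zero {u v x : Fin 2 → K} (hu : u ≠ 0) (hv : v ≠ 0)
    (huv : u ⬝ᵥ v = 0) (hux : u ⬝ᵥ x = 0) : ∃ t : K, t • v = x :=
  LinearMap.exists_smul_eq_of_mem_ker_of_finrank_eq_two (φ := dotProductBilin K K u) (by simp)
    (fun h => hu (dotProduct_eq_zero u fun w => LinearMap.congr_fun h w)) hv huv hux

theorem exists_mulVec_eq_smul_of_vecMul_eq_smul {A : Matrix (Fin 2) (Fin 2) K}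
    {u v : Fin 2 → K} {α : K} (hu : u ≠ 0) (hv : v ≠ 0) (huv : u ⬝ᵥ v = 0)
    (huA : u ᵥ* A = α • u) : ∃ β : K, A *ᵥ v = β • v := by
  have huAv : u ⬝ᵥ (A *ᵥ v) = 0 := by
    rw [dotProduct_mulVec, huA, smul_dotProduct, huv, smul_zero]
  obtain ⟨β, hβ⟩ := exists_smul_eq_of_dotProduct_eq_zero hu hv huv huAv
  exact ⟨β, hβ.symm⟩

theorem exists_vecMul_eq_smul_of_mulVec_eq_smul {A : Matrix (Fin 2) (Fin 2) K}
    {u v : Fin 2 → K} {α : K} (hu : u ≠ 0) (hv : v ≠ 0) (huv : u ⬝ᵥ v = 0)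
    (hAv : A *ᵥ v = α • v) : ∃ β : K, u ᵥ* A = β • u := by
  simp_rw [← mulVec_transpose]
  exact exists_mulVec_eq_smul_of_vecMul_eq_smul hv hu (dotProduct_comm u v ▸ huv)
    (by rwa [vecMul_transpose])

def HasCommonEigenvector {n : Type*} [Fintype n] (A B : Matrix n n K) : Prop :=
  ∃ v ≠ 0, (∃ α : K, A *ᵥ v = α • v) ∧ ∃ β : K, B *ᵥ v = β • v

theorem exists_orthogonal_eigenvectors_iff_hasCommonEigenvector
    (A B : Matrix (Fin 2) (Fin 2) K) :
    (∃ (u : Fin 2 → K) (α : K) (v : Fin 2 → K) (β : K), u ≠ 0 ∧ u ᵥ* A = α • u ∧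
      v ≠ 0 ∧ B *ᵥ v = β • v ∧ u ⬝ᵥ v = 0) ↔ HasCommonEigenvector A B := by
  constructor
  · rintro ⟨u, α, v, β, hu, huA, hv, hBv, huv⟩
    exact ⟨v, hv, exists_mulVec_eq_smul_of_vecMul_eq_smul hu hv huv huA, β, hBv⟩
  · rintro ⟨v, hv, ⟨α, hAv⟩, β, hBv⟩
    obtain ⟨u, hu, huv⟩ := exists_ne_zero_dotProduct_eq_zero v
    obtain ⟨γ, huA⟩ := exists_vecMul_eq_smul_of_mulVec_eq_smul hu hv huv hAv
    exact ⟨u, γ, v, β, hu, huA, hv, hBv, huv⟩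

theorem HasCommonEigenvector.det_commutator_eq_zero {n : Type*} [Fintype n] [DecidableEq n]
    {A B : Matrix n n K} (h : HasCommonEigenvector A B) : (A * B - B * A).det = 0 := by
  obtain ⟨v, hv, ⟨α, hAv⟩, β, hBv⟩ := h
  refine exists_mulVec_eq_zero_iff.mp ⟨v, hv, ?_⟩
  rw [sub_mulVec, ← mulVec_mulVec, ← mulVec_mulVec, hAv, hBv, mulVec_smul, mulVec_smul, hAv,
    hBv, smul_comm, sub_self]

theorem commutator_mul_eq {R : Type*} [CommRing R] (A B : Matrix (Fin 2) (Fin 2) R) :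
    (A * B - B * A) * B = B.trace • (A * B - B * A) - B * (A * B - B * A) := by
  ext i j
  fin_cases i <;> fin_cases j <;>
    simp [mul_apply, Fin.sum_univ_two, trace_fin_two] <;> ring

theorem commutator_mulVec_mulVec_eq_zero {R : Type*} [CommRing R] {A B : Matrix (Fin 2) (Fin 2) R}
    {v : Fin 2 → R} (hv : (A * B - B * A) *ᵥ v = 0) : (A * B - B * A) *ᵥ (B *ᵥ v) = 0 := by
  rw [mulVec_mulVec, commutator_mul_eq, sub_mulVec, smul_mulVec, ← mulVec_mulVec, hv,
    mulVec_zero, smul_zero, sub_zero]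

theorem exists_mulVec_eq_smul_of_commutator_mulVec_eq_zero {A B : Matrix (Fin 2) (Fin 2) K}
    (hB : B ∉ (algebraMap K (Matrix (Fin 2) (Fin 2) K)).range) {v : Fin 2 → K} {β : K}
    (hv : v ≠ 0) (hBv : B *ᵥ v = β • v) (hCv : (A * B - B * A) *ᵥ v = 0) :
    ∃ α : K, A *ᵥ v = α • v := by
  set M := B - algebraMap K _ β
  have hM : M ≠ 0 := fun h => hB ⟨β, (sub_eq_zero.mp h).symm⟩
  have hMw (w : Fin 2 → K) : M *ᵥ w = B *ᵥ w - β • w := by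
    rw [sub_mulVec, Algebra.algebraMap_eq_smul_one, smul_mulVec, one_mulVec]
  have hBAv : (B * A) *ᵥ v = (A * B) *ᵥ v := by
    rw [sub_mulVec, sub_eq_zero] at hCv
    exact hCv.symm
  have hMv : M *ᵥ v = 0 := by rw [hMw, hBv, sub_self]
  have hMAv : M *ᵥ (A *ᵥ v) = 0 := by
    rw [hMw, mulVec_mulVec, hBAv, ← mulVec_mulVec, hBv, mulVec_smul, sub_self]
  obtain ⟨α, hα⟩ := exists_smul_eq_of_mulVec_eq_zero hM hv hMv hMAv
  exact ⟨α, hα.symm⟩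

theorem exists_mulVec_eq_smul [IsAlgClosed K] {n : Type*} [Fintype n] [DecidableEq n] [Nonempty n]
    (B : Matrix n n K) : ∃ v ≠ 0, ∃ β : K, B *ᵥ v = β • v := by
  obtain ⟨β, hβ⟩ := Module.End.exists_eigenvalue (toLin' B)
  obtain ⟨v, hv⟩ := hβ.exists_hasEigenvector
  exact ⟨v, hv.2, β, by simpa using hv.apply_eq_smul⟩

theorem hasCommonEigenvector_of_det_commutator_eq_zero [IsAlgClosed K]
    {A B : Matrix (Fin 2) (Fin 2) K} (hB : B ∉ (algebraMap K (Matrix (Fin 2) (Fin 2) K)).range)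
    (hdet : (A * B - B * A).det = 0) : HasCommonEigenvector A B := by
  obtain ⟨v, hv, hCv⟩ := exists_mulVec_eq_zero_iff.mpr hdet
  obtain ⟨w, hw, β, hBw, hCw⟩ : ∃ w ≠ 0, ∃ β : K, B *ᵥ w = β • w ∧ (A * B - B * A) *ᵥ w = 0 := by
    by_cases hBv : ∃ β : K, B *ᵥ v = β • v
    · obtain ⟨β, hβ⟩ := hBv
      exact ⟨v, hv, β, hβ, hCv⟩
    · have hC : A * B - B * A = 0 := by
        by_contra hC
        obtain ⟨t, ht⟩ := exists_smul_eq_of_mulVec_eq_zero hC hv hCv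
          (commutator_mulVec_mulVec_eq_zero hCv)
        exact hBv ⟨t, ht.symm⟩
      obtain ⟨w, hw, β, hBw⟩ := exists_mulVec_eq_smul B
      exact ⟨w, hw, β, hBw, by rw [hC, zero_mulVec]⟩
  exact ⟨w, hw, exists_mulVec_eq_smul_of_commutator_mulVec_eq_zero hB hw hBw hCw, β, hBw⟩

theorem commutator_eq_zero_of_mem_range {R n : Type*} [CommRing R] [Fintype n] [DecidableEq n]
    {A : Matrix n n R} (hA : A ∈ (algebraMap R (Matrix n n R)).range) (B : Matrix n n R) :
    A * B - B * A = 0 := by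
  obtain ⟨c, rfl⟩ := hA
  rw [Algebra.commutes, sub_self]

theorem det_commutator_eq_zero_iff [IsAlgClosed K] (A B : Matrix (Fin 2) (Fin 2) K) :
    (A * B - B * A).det = 0 ↔ A ∈ (algebraMap K (Matrix (Fin 2) (Fin 2) K)).range ∨
      B ∈ (algebraMap K (Matrix (Fin 2) (Fin 2) K)).range ∨ HasCommonEigenvector A B := by
  constructor
  · intro hdet
    by_cases hB : B ∈ (algebraMap K (Matrix (Fin 2) (Fin 2) K)).range
    · exact Or.inr (Or.inl hB)
    · exact Or.inr (Or.inr (hasCommonEigenvector_of_det_commutator_eq_zero hB hdet))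
  · rintro (hA | hB | h)
    · rw [commutator_eq_zero_of_mem_range hA, det_zero]
    · rw [← neg_sub, commutator_eq_zero_of_mem_range hB, neg_zero, det_zero]
    · exact h.det_commutator_eq_zero

theorem minpoly_eq_charpoly_iff_notMem_range (A : Matrix (Fin 2) (Fin 2) K) :
    minpoly K A = A.charpoly ↔ A ∉ (algebraMap K (Matrix (Fin 2) (Fin 2) K)).range := by
  have hdeg : A.charpoly.natDegree = 2 := by simp [charpoly_natDegree_eq_dim]
  rw [← minpoly.two_le_natDegree_iff (Algebra.IsIntegral.isIntegral A)]
  constructor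
  · intro h
    rw [h, hdeg]
  · intro h
    exact (eq_of_monic_of_dvd_of_natDegree_le (minpoly.monic (Algebra.IsIntegral.isIntegral A))
      A.charpoly_monic (minpoly_dvd_charpoly A) (hdeg.trans_le h)).symm

theorem map_mem_range_algebraMap_iff {R S n : Type*} [CommRing R] [CommRing S] [Fintype n]
    [DecidableEq n] {f : R →+* S} (hf : Function.Injective f) (A : Matrix n n R) :
    A.map f ∈ (algebraMap S (Matrix n n S)).range ↔ A ∈ (algebraMap R (Matrix n n R)).range := by
  constructor
  · rintro ⟨c, hc⟩
    rcases isEmpty_or_nonempty n with _ | ⟨⟨k⟩⟩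
    · exact ⟨0, Subsingleton.elim _ _⟩
    have hentry (i j : n) : f (A i j) = if i = j then c else 0 := by
      simpa [algebraMap_matrix_apply] using (congrFun₂ hc i j).symm
    refine ⟨A k k, ext fun i j => hf ?_⟩
    rw [hentry, algebraMap_matrix_apply]
    split_ifs <;> simp [hentry]
  · rintro ⟨c, rfl⟩
    exact ⟨f c, ext fun i j => by simp [algebraMap_matrix_apply, apply_ite f]⟩

end Matrix

/-- For 2×2 matrices, the commutator AB − BA is invertible iff A and B are
cyclic and uv ≠ 0 for every left eigenvector u of A and right eigenvector v
of B over the algebraic closure. -/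
theorem commutator_isUnit_iff
    {F : Type*} [Field F]
    (A B : Matrix (Fin 2) (Fin 2) F) :
    IsUnit (A * B - B * A) ↔
      ((minpoly F A = A.charpoly ∧ minpoly F B = B.charpoly) ∧
        ∀ (u : Fin 2 → AlgebraicClosure F) (α : AlgebraicClosure F)
          (v : Fin 2 → AlgebraicClosure F) (β : AlgebraicClosure F),
          u ≠ 0 → Matrix.vecMul u (A.map (algebraMap F (AlgebraicClosure F))) = α • u →
          v ≠ 0 → Matrix.mulVec (B.map (algebraMap F (AlgebraicClosure F))) v = β • v →
          dotProduct u v ≠ 0) := by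
  set f := algebraMap F (AlgebraicClosure F)
  have hunit : IsUnit (A * B - B * A) ↔ (A.map f * B.map f - B.map f * A.map f).det ≠ 0 := by
    rw [isUnit_iff_isUnit_det, isUnit_iff_ne_zero, ← map_ne_zero f, RingHom.map_det,
      map_sub, map_mul, map_mul]
    rfl
  rw [hunit, Ne, det_commutator_eq_zero_iff, minpoly_eq_charpoly_iff_notMem_range,
    minpoly_eq_charpoly_iff_notMem_range, ← map_mem_range_algebraMap_iff f.injective A,
    ← map_mem_range_algebraMap_iff f.injective B,
    ← exists_orthogonal_eigenvectors_iff_hasCommonEigenvector]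
  simp only [not_or, not_exists, not_and, and_assoc]
end

section
/- Let F be a field, S ∈ F^{m×n}, and suppose A ∈ F^{m×m} and B ∈ F^{n×n} are cyclic and diagonalizable over an extension field E of F; let U ∈ E^{m×m} and V ∈ E^{n×n} be invertible matrices such that U A U^{−1} and V^{−1} B V are diagonal. Then the dimension over F of the F-linear span of {A^i S B^j : i, j ≥ 0} equals the number of nonzero entries of the matrix U S V. -/
open Matrix Polynomial Module Submodule Set

/-!
Over `E`, conjugation by `U` and `V` turns `A ^ i * S * B ^ j` into
`diagonal a ^ i * T * diagonal b ^ j` with `T = U * S * V`, whose `(p, q)` entry is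
`a p ^ i * T p q * b q ^ j`. Cyclicity forces the eigenvalues `a p` (and `b q`) to be pairwise
distinct, so Lagrange interpolation puts `single p p 1 * T * single q q 1 = single p q (T p q)` in
the span: over `E` the span is the span of the matrix units at the nonzero entries of `T`.
Passing from `F` to `E` does not change the dimension of a span, because linear independence of
vectors with entries in `F` persists over `E`.
-/

theorem finrank_span_range_comp_of_injective {R M N ι : Type*} [Ring R] [AddCommGroup M]
    [Module R M] [AddCommGroup N] [Module R N] {f : M →ₗ[R] N} (hf : Function.Injective f)
    (v : ι → M) : finrank R (span R (range (f ∘ v))) = finrank R (span R (range v)) := by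
  rw [range_comp, ← map_span]
  exact (equivMapOfInjective f hf _).finrank_eq.symm

theorem finrank_span_range_algebraMap_comp {F E ι κ : Type*} [Field F] [Field E] [Algebra F E]
    [Finite κ] (v : ι → κ → F) :
    finrank E (span E (range fun i => algebraMap F E ∘ v i)) = finrank F (span F (range v)) := by
  obtain ⟨ι', a, -, hspan, hli⟩ := exists_linearIndependent' F v
  have : Fintype ι' := have := hli.finite; Fintype.ofFinite ι'
  have hspanE : span E (range fun i => algebraMap F E ∘ (v ∘ a) i) =
      span E (range fun i => algebraMap F E ∘ v i) := by
    refine le_antisymm (span_mono (range_comp_subset_range a fun i => algebraMap F E ∘ v i))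
      (span_le.mpr ?_)
    rintro _ ⟨i, rfl⟩
    have hi : v i ∈ span F (range (v ∘ a)) := hspan ▸ subset_span (mem_range_self i)
    have := apply_mem_span_image_of_mem_span (LinearMap.compLeft (Algebra.linearMap F E) κ) hi
    rw [← range_comp] at this
    exact span_le_restrictScalars F E _ this
  rw [← hspanE, ← hspan, finrank_span_eq_card hli,
    finrank_span_eq_card (linearIndependent_algebraMap_comp_iff.mpr hli)]

theorem Polynomial.aeval_mem_span_range_pow {R A : Type*} [CommSemiring R] [Semiring A]
    [Algebra R A] (x : A) (f : R[X]) : aeval x f ∈ span R (range fun i : ℕ => x ^ i) := by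
  rw [aeval_eq_sum_range]
  exact sum_mem fun i _ => smul_mem _ _ (subset_span (mem_range_self i))

namespace Matrix

theorem finrank_span_range_map_algebraMap {F E ι m n : Type*} [Field F] [Field E]
    [Algebra F E] [Finite m] [Finite n] (v : ι → Matrix m n F) :
    finrank E (span E (range fun i => (v i).map (algebraMap F E))) =
      finrank F (span F (range v)) := by
  let flattenF : Matrix m n F ≃ₗ[F] (m × n → F) :=
    (ofLinearEquiv F).symm ≪≫ₗ (LinearEquiv.curry F F m n).symm
  let flattenE : Matrix m n E ≃ₗ[E] (m × n → E) :=
    (ofLinearEquiv E).symm ≪≫ₗ (LinearEquiv.curry E E m n).symm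
  rw [← finrank_span_range_comp_of_injective flattenE.injective,
    ← finrank_span_range_comp_of_injective flattenF.injective]
  exact finrank_span_range_algebraMap_comp (flattenF ∘ v)

theorem finrank_span_range_mul_mul {K ι m n : Type*} [CommRing K] [Fintype m] [DecidableEq m]
    [Fintype n] [DecidableEq n] {P : Matrix m m K} {Q : Matrix n n K} (hP : IsUnit P.det)
    (hQ : IsUnit Q.det) (v : ι → Matrix m n K) :
    finrank K (span K (range fun i => P * v i * Q)) = finrank K (span K (range v)) := by
  let f : Matrix m n K →ₗ[K] Matrix m n K :=
    { toFun X := P * X * Q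
      map_add' X Y := by rw [Matrix.mul_add, Matrix.add_mul]
      map_smul' c X := by rw [Matrix.mul_smul, Matrix.smul_mul]; rfl }
  refine finrank_span_range_comp_of_injective (f := f) (fun X Y hXY => ?_) v
  simpa [f, Matrix.mul_assoc, nonsing_inv_mul_cancel_left _ _ hP,
    mul_nonsing_inv_cancel_right _ _ hQ] using congrArg (fun Z => P⁻¹ * Z * Q⁻¹) hXY

theorem mul_pow_mul_mul_pow_mul_of_semiconjBy {R m n : Type*} [Semiring R] [Fintype m]
    [DecidableEq m] [Fintype n] [DecidableEq n] {P A D : Matrix m m R} {Q B D' : Matrix n n R}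
    (hA : SemiconjBy P A D) (hB : SemiconjBy Q D' B) (S : Matrix m n R) (i j : ℕ) :
    P * (A ^ i * S * B ^ j) * Q = D ^ i * (P * S * Q) * D' ^ j :=
  calc _ = P * A ^ i * S * (B ^ j * Q) := by simp only [Matrix.mul_assoc]
    _ = _ := by rw [(hA.pow_right i).eq, ← (hB.pow_right j).eq]; simp only [Matrix.mul_assoc]

theorem single_mem_span_range_diagonal_pow {K m : Type*} [Field K] [Fintype m] [DecidableEq m]
    {d : m → K} (hd : Function.Injective d) (p : m) :
    single p p 1 ∈ span K (range fun i : ℕ => diagonal d ^ i) := by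
  have hbasis (q : m) :
      (Lagrange.basis Finset.univ d p).eval (d q) = (Pi.single p 1 : m → K) q := by
    rcases eq_or_ne q p with rfl | hqp
    · simp [Lagrange.eval_basis_self hd.injOn]
    · simp [Lagrange.eval_basis_of_ne hqp.symm, hqp]
  have : aeval (diagonal d) (Lagrange.basis Finset.univ d p) = single p p 1 := by
    rw [← diagonal_single, ← diagonalAlgHom_apply (R := K), aeval_algHom_apply,
      diagonalAlgHom_apply, aeval_pi_apply]
    simp [hbasis]
  exact this ▸ aeval_mem_span_range_pow _ _

theorem mul_mul_mem_span_range {K ι κ m n : Type*} [CommSemiring K] [Fintype m] [Fintype n]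
    {f : ι → Matrix m m K} {g : κ → Matrix n n K} (T : Matrix m n K) {X : Matrix m m K}
    {Y : Matrix n n K} (hX : X ∈ span K (range f)) (hY : Y ∈ span K (range g)) :
    X * T * Y ∈ span K (range fun ij : ι × κ => f ij.1 * T * g ij.2) := by
  let μ : Matrix m m K →ₗ[K] Matrix n n K →ₗ[K] Matrix m n K :=
    LinearMap.mk₂ K (fun X Y => X * T * Y) (fun _ _ _ => by rw [Matrix.add_mul, Matrix.add_mul])
      (fun _ _ _ => by rw [Matrix.smul_mul, Matrix.smul_mul]) (fun _ _ _ => Matrix.mul_add _ _ _)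
      (fun _ _ _ => Matrix.mul_smul _ _ _)
  have := apply_mem_map₂ μ hX hY
  rwa [map₂_span_span, image2_range] at this

theorem mem_span_single_of_forall_eq_zero {K m n : Type*} [Semiring K] [Fintype m] [DecidableEq m]
    [Fintype n] [DecidableEq n] {T X : Matrix m n K} (h : ∀ p q, T p q = 0 → X p q = 0) :
    X ∈ span K (range fun pq : {pq : m × n // T pq.1 pq.2 ≠ 0} => single pq.1.1 pq.1.2 1) := by
  rw [matrix_eq_sum_single X]
  refine sum_mem fun p _ => sum_mem fun q _ => ?_
  by_cases hT : T p q = 0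
  · simp [h p q hT]
  · rw [show single p q (X p q) = X p q • single p q 1 by rw [smul_single, smul_eq_mul, mul_one]]
    exact smul_mem _ _ (subset_span ⟨⟨(p, q), hT⟩, rfl⟩)

theorem span_range_diagonal_pow_mul_mul_diagonal_pow {K m n : Type*} [Field K] [Fintype m]
    [DecidableEq m] [Fintype n] [DecidableEq n] {d : m → K} {e : n → K}
    (hd : Function.Injective d) (he : Function.Injective e) (T : Matrix m n K) :
    span K (range fun ij : ℕ × ℕ => diagonal d ^ ij.1 * T * diagonal e ^ ij.2) =
      span K (range fun pq : {pq : m × n // T pq.1 pq.2 ≠ 0} => single pq.1.1 pq.1.2 1) := by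
  refine le_antisymm (span_le.mpr ?_) (span_le.mpr ?_)
  · rintro _ ⟨⟨i, j⟩, rfl⟩
    refine mem_span_single_of_forall_eq_zero fun p q hT => ?_
    simp [diagonal_pow, hT]
  · rintro _ ⟨⟨⟨p, q⟩, hT⟩, rfl⟩
    have hmem := mul_mul_mem_span_range T (single_mem_span_range_diagonal_pow hd p)
      (single_mem_span_range_diagonal_pow he q)
    rw [single_mul_mul_single, one_mul, mul_one] at hmem
    simpa [smul_single, hT] using smul_mem _ (T p q)⁻¹ hmem

theorem finrank_span_range_single {K m n : Type*} [Field K] [Fintype m] [DecidableEq m]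
    [Fintype n] [DecidableEq n] (P : m × n → Prop) :
    finrank K (span K (range fun pq : {pq // P pq} => single pq.1.1 pq.1.2 (1 : K))) =
      Nat.card {pq // P pq} := by
  classical
  have hli := (stdBasis K m n).linearIndependent.comp ((↑) : {pq // P pq} → m × n)
    Subtype.val_injective
  simp only [Function.comp_def, fun pq : m × n => stdBasis_eq_single K pq.1 pq.2] at hli
  rw [finrank_span_eq_card hli, Nat.card_eq_fintype_card]

theorem card_le_finrank_span_range_pow {F m : Type*} [Field F] [Fintype m] [DecidableEq m]
    {A : Matrix m m F} (hA : minpoly F A = A.charpoly) :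
    Fintype.card m ≤ finrank F (span F (range fun i : ℕ => A ^ i)) :=
  calc Fintype.card m = (minpoly F A).natDegree := by rw [hA, charpoly_natDegree_eq_dim]
    _ = finrank F (span F (range fun i : Fin (minpoly F A).natDegree => A ^ (i : ℕ))) := by
      rw [finrank_span_eq_card (linearIndependent_pow A), Fintype.card_fin]
    _ ≤ finrank F (span F (range fun i : ℕ => A ^ i)) :=
      Submodule.finrank_mono (span_mono (range_comp_subset_range Fin.val fun i : ℕ => A ^ i))

theorem finrank_span_range_diagonal_pow_le {K m : Type*} [CommRing K] [StrongRankCondition K]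
    [Fintype m] [DecidableEq m] (d : m → K) :
    finrank K (span K (range fun i : ℕ => diagonal d ^ i)) ≤ Nat.card (range d) := by
  classical
  let Φ : (range d → K) →ₗ[K] Matrix m m K :=
    diagonalLinearMap m K K ∘ₗ LinearMap.funLeft K K (rangeFactorization d)
  have hspan : span K (range fun i : ℕ => diagonal d ^ i) ≤ LinearMap.range Φ := by
    refine span_le.mpr ?_
    rintro _ ⟨i, rfl⟩
    exact ⟨fun c => c.1 ^ i, by simp [Φ, diagonal_pow, rangeFactorization]⟩
  calc _ ≤ finrank K (LinearMap.range Φ) := Submodule.finrank_mono hspan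
    _ ≤ finrank K (range d → K) := LinearMap.finrank_range_le Φ
    _ = Nat.card (range d) := by rw [finrank_fintype_fun_eq_card, Nat.card_eq_fintype_card]

/-- By cyclicity the powers of `A` span `card m` dimensions, while the powers of `diagonal d` span
at most as many dimensions as `d` has distinct values. -/
theorem injective_of_semiconjBy_diagonal {F E m : Type*} [Field F] [Field E] [Algebra F E]
    [Fintype m] [DecidableEq m] {A : Matrix m m F} (hA : minpoly F A = A.charpoly)
    {W : Matrix m m E} (hW : IsUnit W.det) {d : m → E}
    (h : SemiconjBy W (A.map (algebraMap F E)) (diagonal d)) : Function.Injective d := by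
  have hpow : ∀ i : ℕ, W * (A ^ i).map (algebraMap F E) * W⁻¹ = diagonal d ^ i := fun i => by
    rw [Matrix.map_pow, (h.pow_right i).eq, mul_nonsing_inv_cancel_right _ _ hW]
  have hcard : Nat.card m ≤ Nat.card (range d) :=
    calc Nat.card m ≤ finrank F (span F (range fun i : ℕ => A ^ i)) := by
          rw [Nat.card_eq_fintype_card]; exact card_le_finrank_span_range_pow hA
      _ = finrank E (span E (range fun i : ℕ => W * (A ^ i).map (algebraMap F E) * W⁻¹)) := by
          rw [finrank_span_range_mul_mul hW (isUnit_nonsing_inv_det W hW),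
            finrank_span_range_map_algebraMap]
      _ ≤ Nat.card (range d) := by
          rw [funext hpow]; exact finrank_span_range_diagonal_pow_le d
  exact Subtype.val_injective.comp
    (rangeFactorization_surjective.bijective_of_nat_card_le hcard).injective

end Matrix

/-- If A and B are cyclic and diagonalized over E by invertible matrices U and V
(U A U⁻¹ and V⁻¹ B V diagonal), then the dimension of the span of {A^i S B^j}
equals the number of nonzero entries of U S V. -/
theorem finrank_span_eq_card_nonzero_entries
    {F E : Type*} [Field F] [Field E] [Algebra F E] {m n : ℕ}
    (A : Matrix (Fin m) (Fin m) F) (B : Matrix (Fin n) (Fin n) F)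
    (S : Matrix (Fin m) (Fin n) F)
    (hA : minpoly F A = A.charpoly) (hB : minpoly F B = B.charpoly)
    (U : Matrix (Fin m) (Fin m) E) (V : Matrix (Fin n) (Fin n) E)
    (hU : IsUnit U.det) (hV : IsUnit V.det)
    (hUA : (U * A.map (algebraMap F E) * U⁻¹).IsDiag)
    (hBV : (V⁻¹ * B.map (algebraMap F E) * V).IsDiag) :
    Module.finrank F (Submodule.span F
        {M : Matrix (Fin m) (Fin n) F | ∃ i j : ℕ, M = A ^ i * S * B ^ j}) =
      Nat.card {p : Fin m × Fin n // (U * S.map (algebraMap F E) * V) p.1 p.2 ≠ 0} := by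
  obtain ⟨dA, hdA⟩ : ∃ d, U * A.map (algebraMap F E) * U⁻¹ = Matrix.diagonal d :=
    ⟨_, hUA.diagonal_diag.symm⟩
  obtain ⟨dB, hdB⟩ : ∃ d, V⁻¹ * B.map (algebraMap F E) * V = Matrix.diagonal d :=
    ⟨_, hBV.diagonal_diag.symm⟩
  have hsA : SemiconjBy U (A.map (algebraMap F E)) (Matrix.diagonal dA) := by
    rw [← hdA]; exact (nonsing_inv_mul_cancel_right _ _ hU).symm
  have hsB : SemiconjBy V⁻¹ (B.map (algebraMap F E)) (Matrix.diagonal dB) := by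
    rw [← hdB]; exact (mul_nonsing_inv_cancel_right _ _ hV).symm
  have hsB' : SemiconjBy V (Matrix.diagonal dB) (B.map (algebraMap F E)) := by
    rw [← hdB, SemiconjBy, Matrix.mul_assoc, mul_nonsing_inv_cancel_left _ _ hV]
  have hset : {M : Matrix (Fin m) (Fin n) F | ∃ i j : ℕ, M = A ^ i * S * B ^ j} =
      range fun ij : ℕ × ℕ => A ^ ij.1 * S * B ^ ij.2 := by
    ext M; simp [eq_comm]
  set T := U * S.map (algebraMap F E) * V
  have hspan : span E (range fun ij : ℕ × ℕ =>
        U * (A ^ ij.1 * S * B ^ ij.2).map (algebraMap F E) * V) =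
      span E (range fun pq : {pq : Fin m × Fin n // T pq.1 pq.2 ≠ 0} =>
        single pq.1.1 pq.1.2 1) := by
    simp only [Matrix.map_mul, Matrix.map_pow, mul_pow_mul_mul_pow_mul_of_semiconjBy hsA hsB']
    exact span_range_diagonal_pow_mul_mul_diagonal_pow
      (injective_of_semiconjBy_diagonal hA hU hsA)
      (injective_of_semiconjBy_diagonal hB (isUnit_nonsing_inv_det V hV) hsB) T
  rw [hset, ← finrank_span_range_map_algebraMap (E := E), ← finrank_span_range_mul_mul hU hV,
    hspan, finrank_span_range_single]
end

section
/- Let F be a field, A ∈ F^{m×m}, B ∈ F^{n×n}, S ∈ F^{m×n}, and let E be an extension field of F. Suppose U ∈ E^{s×m} is a matrix whose rows u_h satisfy u_h A = α_h u_h with α_h an eigenvalue of A (for 0 ≤ h < s), and V ∈ E^{n×t} is a matrix whose columns v_k satisfy B v_k = β_k v_k with β_k an eigenvalue of B (for 0 ≤ k < t). Let R_{A,B;S} ∈ F^{mn×mn} be the matrix whose columns are the column-vectorizations col(A^i S B^j) for 0 ≤ i < m and 0 ≤ j < n, ordered so that the column with index i + mj is col(A^i S B^j). Then (V^T ⊗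 U) R_{A,B;S} = diag(col(USV)) · (W_B ⊗ W_A), where W_A ∈ E^{s×m} is the matrix whose h-th row is (1, α_h, α_h^2, …, α_h^{m−1}), W_B ∈ E^{t×n} is the matrix whose k-th row is (1, β_k, β_k^2, …, β_k^{n−1}), ⊗ denotes the Kronecker product, and diag(col(USV)) is the square diagonal matrix whose diagonal is the column-vectorization of USV. -/
open Matrix Polynomial
open scoped Kronecker

/-- Lemma 8 (key identity): if the rows of U are left eigenvectors of A with
eigenvalues α_h and the columns of V are right eigenvectors of B with
eigenvalues β_k, then (Vᵀ ⊗ U) R_{A,B;S} = diag(col(USV)) (W_B ⊗ W_A),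
where the column of R_{A,B;S} indexed by (j,i) (i.e. i + mj) is col(A^i S B^j),
and col(M) is indexed so that its (j,i) entry is M i j. -/
theorem kronecker_eigen_identity
    {F E : Type*} [Field F] [Field E] [Algebra F E] {m n s t : ℕ}
    (A : Matrix (Fin m) (Fin m) F) (B : Matrix (Fin n) (Fin n) F)
    (S : Matrix (Fin m) (Fin n) F)
    (U : Matrix (Fin s) (Fin m) E) (V : Matrix (Fin n) (Fin t) E)
    (α : Fin s → E) (β : Fin t → E)
    (hαev : ∀ h : Fin s, (Polynomial.aeval (α h)) A.charpoly = 0)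
    (hβev : ∀ k : Fin t, (Polynomial.aeval (β k)) B.charpoly = 0)
    (hU : ∀ h : Fin s, Matrix.vecMul (U h) (A.map (algebraMap F E)) = α h • U h)
    (hV : ∀ k : Fin t,
      Matrix.mulVec (B.map (algebraMap F E)) (fun r => V r k) = β k • fun r => V r k) :
    (Vᵀ ⊗ₖ U) *
        ((Matrix.of fun (rc ij : Fin n × Fin m) =>
          (A ^ (ij.2 : ℕ) * S * B ^ (ij.1 : ℕ)) rc.2 rc.1).map (algebraMap F E)) =
      Matrix.diagonal (fun kh : Fin t × Fin s =>
          (U * S.map (algebraMap F E) * V) kh.2 kh.1) *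
        ((Matrix.of fun (k : Fin t) (j : Fin n) => β k ^ (j : ℕ)) ⊗ₖ
          (Matrix.of fun (h : Fin s) (i : Fin m) => α h ^ (i : ℕ))) := by
  have φ := algebraMap F E
  set φ := algebraMap F E with hφ
  have hA : ∀ (h : Fin s) (i : ℕ),
      Matrix.vecMul (U h) ((A ^ i).map φ) = α h ^ i • U h := by
    intro h i
    induction i with
    | zero => simp [Matrix.map_one]
    | succ i ih =>
        rw [pow_succ, Matrix.map_mul, ← Matrix.vecMul_vecMul, ih,
          Matrix.smul_vecMul, hU, smul_smul, pow_succ]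
  have hB : ∀ (k : Fin t) (j : ℕ),
      Matrix.mulVec ((B ^ j).map φ) (fun r => V r k)
        = β k ^ j • fun r => V r k := by
    intro k j
    induction j with
    | zero => simp [Matrix.map_one]
    | succ j ih =>
        rw [pow_succ, Matrix.map_mul, ← Matrix.mulVec_mulVec, hV,
          Matrix.mulVec_smul, ih, smul_smul, pow_succ, mul_comm]
  ext ⟨k, h⟩ ⟨j, i⟩
  rw [Matrix.mul_apply, Matrix.diagonal_mul]
  have hmap : ((A ^ (i : ℕ) * S * B ^ (j : ℕ)).map φ)
      = (A ^ (i : ℕ)).map φ * S.map φ * (B ^ (j : ℕ)).map φ := by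
    simp [Matrix.map_mul]
  calc ∑ x : Fin n × Fin m, (Vᵀ ⊗ₖ U) (k, h) x *
          ((Matrix.of fun (rc ij : Fin n × Fin m) =>
            (A ^ (ij.2 : ℕ) * S * B ^ (ij.1 : ℕ)) rc.2 rc.1).map φ) x (j, i)
      = ∑ r : Fin n, ∑ c : Fin m,
          V r k * (U h c * ((A ^ (i:ℕ) * S * B ^ (j:ℕ)).map φ) c r) := by
        rw [Fintype.sum_prod_type]
        simp [Matrix.kroneckerMap_apply, Matrix.map_apply, mul_assoc,
          mul_left_comm, mul_comm]
    _ = ∑ r : Fin n,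
          V r k * Matrix.vecMul (U h) ((A ^ (i:ℕ) * S * B ^ (j:ℕ)).map φ) r := by
        simp [Matrix.vecMul, dotProduct, Finset.mul_sum]
    _ = ∑ r : Fin n, V r k *
          (α h ^ (i:ℕ) • Matrix.vecMul (U h) (S.map φ * (B ^ (j:ℕ)).map φ)) r := by
        rw [hmap, Matrix.mul_assoc, ← Matrix.vecMul_vecMul, hA, Matrix.smul_vecMul]
    _ = α h ^ (i:ℕ) *
          (Matrix.vecMul (U h) (S.map φ * (B ^ (j:ℕ)).map φ) ⬝ᵥ fun r => V r k) := by
        rw [dotProduct, Finset.mul_sum]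
        exact Finset.sum_congr rfl fun r _ => by
          simp only [Pi.smul_apply, smul_eq_mul]; ring
    _ = α h ^ (i:ℕ) * ((Matrix.vecMul (U h) (S.map φ)) ⬝ᵥ
          Matrix.mulVec ((B ^ (j:ℕ)).map φ) (fun r => V r k)) := by
        rw [← Matrix.vecMul_vecMul, ← Matrix.dotProduct_mulVec]
    _ = α h ^ (i:ℕ) * (β k ^ (j:ℕ) *
          (Matrix.vecMul (U h) (S.map φ) ⬝ᵥ fun r => V r k)) := by
        rw [hB, dotProduct_smul, smul_eq_mul]
    _ = (U * S.map φ * V) h k *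
          ((Matrix.of fun (k : Fin t) (j : Fin n) => β k ^ (j : ℕ)) ⊗ₖ
            (Matrix.of fun (h : Fin s) (i : Fin m) => α h ^ (i : ℕ))) (k, h) (j, i) := by
        simp [Matrix.mul_apply, Matrix.vecMul, dotProduct,
          Matrix.kroneckerMap_apply, Finset.mul_sum, Finset.sum_mul]
        exact Finset.sum_congr rfl fun r _ => Finset.sum_congr rfl fun c _ => by ring
end

section
/- Let F be a finite field, m and n positive integers, A ∈ F^{m×m} and B ∈ F^{n×n} matrices whose characteristic polynomials are irreducible over F. Then the following are equivalent: (i) for every nonzero S ∈ F^{m×n}, the F-linear span of {A^i S B^j : i, j ≥ 0} equals F^{m×n}; (ii) gcd(m, n) = 1. -/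
open Matrix Polynomial

/-!
If `χ_A` is irreducible, `F[A] ≅ F[X]/(χ_A)` is a field of degree `m` over `F`, and a
subspace of `F^{m×n}` stable under left multiplication by `A` is a vector space over it, so its
dimension is a multiple of `m`; on the right the same holds with `B` and `n`. So when
`gcd(m, n) = 1` the nonzero space `V_{A,B;S}` has dimension `mn`.

When `d = gcd(m, n) > 1`, a field `L` of degree `d` over `F` embeds into both `F[A]` and `F[B]`.
This makes `F^m` and `F^n` vector spaces over `L`, and any nonzero `L`-linear map `S : F^n → F^m`
satisfies `a S = S b` whenever `a ∈ F[A]`, `b ∈ F[B]` are the images of the same `x ∈ L`. Then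
`V_{A,B;S}` lies in `{T | a T = T b}`, which is proper as soon as `x ∉ F`.
-/

open Module

namespace AdjoinRoot

variable {R S : Type*} [CommRing R] [Ring S] [Algebra R S] {p : R[X]} {a : S}

/-- Unlike `AdjoinRoot.liftAlgHom`, this allows a noncommutative target such as a matrix algebra. -/
noncomputable def aevalHom (ha : aeval a p = 0) : AdjoinRoot p →ₐ[R] S :=
  Ideal.Quotient.liftₐ (Ideal.span {p}) (aeval a) fun q hq => by
    obtain ⟨c, rfl⟩ := Ideal.mem_span_singleton'.mp hq
    rw [map_mul, ha, mul_zero]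

theorem aevalHom_root (ha : aeval a p = 0) : aevalHom ha (root p) = a :=
  aeval_X a

theorem commute_aevalHom (ha : aeval a p = 0) (x : AdjoinRoot p) :
    Commute a (aevalHom ha x) := by
  simpa only [aevalHom_root] using (Commute.all (root p) x).map (aevalHom ha)

theorem finrank_eq_natDegree {K : Type*} [Field K] (f : K[X]) :
    finrank K (AdjoinRoot f) = f.natDegree :=
  finrank_quotient_span_eq_natDegree

end AdjoinRoot

theorem exists_module_of_algHom {F K V : Type*} [CommSemiring F] [Semiring K] [Algebra F K]
    [AddCommMonoid V] [Module F V] (ψ : K →ₐ[F] Module.End F V) :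
    ∃ _ : Module K V, IsScalarTower F K V ∧ ∀ (x : K) (v : V), x • v = ψ x v :=
  letI : Module K V := Module.compHom V ψ.toRingHom
  ⟨this, .of_algebraMap_smul fun c v => by
    change ψ (algebraMap F K c) v = c • v
    rw [ψ.commutes, Module.algebraMap_end_apply], fun _ _ => rfl⟩

section FieldRepresentation

variable {F K V W : Type*} [Field F] [Field K] [Algebra F K]
  [AddCommGroup V] [Module F V] [AddCommGroup W] [Module F W]

theorem finrank_dvd_finrank_of_algHom (ψ : K →ₐ[F] Module.End F V) :
    finrank F K ∣ finrank F V := by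
  obtain ⟨_, _, -⟩ := exists_module_of_algHom ψ
  exact Dvd.intro _ (Module.finrank_mul_finrank F K V)

theorem exists_ne_zero_forall_comp_eq_comp_of_algHom [Nontrivial V] [Nontrivial W]
    (ψ : K →ₐ[F] Module.End F V) (χ : K →ₐ[F] Module.End F W) :
    ∃ T : W →ₗ[F] V, T ≠ 0 ∧ ∀ x, ψ x ∘ₗ T = T ∘ₗ χ x := by
  obtain ⟨_, _, hψ⟩ := exists_module_of_algHom ψ
  obtain ⟨_, _, hχ⟩ := exists_module_of_algHom χ
  obtain ⟨v, hv⟩ := exists_ne (0 : V)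
  obtain ⟨w, hw⟩ := exists_ne (0 : W)
  obtain ⟨f, hf⟩ : ∃ f : Module.Dual K W, f w ≠ 0 := by
    by_contra! h
    exact hw ((Module.forall_dual_apply_eq_zero_iff K w).mp h)
  refine ⟨(f.smulRight v).restrictScalars F, fun h => ?_, fun x => LinearMap.ext fun u => ?_⟩
  · have hTw := LinearMap.congr_fun h w
    rw [LinearMap.restrictScalars_apply, LinearMap.smulRight_apply, LinearMap.zero_apply,
      smul_eq_zero] at hTw
    exact hTw.elim hf hv
  · simp [← hψ, ← hχ, smul_smul]

theorem natDegree_dvd_finrank_of_aeval_eq_zero {r : F[X]} (hr : Irreducible r)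
    {f : Module.End F V} (hf : aeval f r = 0) : r.natDegree ∣ finrank F V := by
  have : Fact (Irreducible r) := ⟨hr⟩
  simpa [AdjoinRoot.finrank_eq_natDegree] using
    finrank_dvd_finrank_of_algHom (AdjoinRoot.aevalHom hf)

end FieldRepresentation

theorem LinearMap.aeval_restrict_apply {R M : Type*} [CommSemiring R] [AddCommMonoid M]
    [Module R M] (f : Module.End R M) {p : Submodule R M} (hf : ∀ x ∈ p, f x ∈ p) (q : R[X])
    (x : p) : (aeval (f.restrict hf) q x : M) = aeval f q (x : M) := by
  induction q using Polynomial.induction_on' with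
  | add q₁ q₂ h₁ h₂ => simp [h₁, h₂]
  | monomial k c =>
    simp only [aeval_monomial, Module.End.mul_apply, Module.algebraMap_end_apply,
      SetLike.val_smul]
    rw [Module.End.pow_restrict, LinearMap.coe_restrict_apply]

namespace Matrix

section

variable {R : Type*} [CommSemiring R] {m n : Type*}

theorem aeval_mulLeftLinearMap_apply [Fintype m] [DecidableEq m] (A : Matrix m m R) (q : R[X])
    (T : Matrix m n R) :
    aeval (mulLeftLinearMap n R A) q T = aeval A q * T := by
  induction q using Polynomial.induction_on' with
  | add q₁ q₂ h₁ h₂ => simp [h₁, h₂, Matrix.add_mul]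
  | monomial k c => simp [aeval_monomial, ← Algebra.smul_def, Matrix.smul_mul]

theorem aeval_mulRightLinearMap_apply [Fintype n] [DecidableEq n] (B : Matrix n n R) (q : R[X])
    (T : Matrix m n R) :
    aeval (mulRightLinearMap m R B) q T = T * aeval B q := by
  induction q using Polynomial.induction_on' with
  | add q₁ q₂ h₁ h₂ => simp [h₁, h₂, Matrix.mul_add]
  | monomial k c => simp [aeval_monomial, ← Algebra.smul_def, Matrix.mul_smul]

variable [Fintype m] [Fintype n] [DecidableEq m] [DecidableEq n]

/-- The space `V_{A,B;S}`. -/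
def bicyclicSpan (A : Matrix m m R) (B : Matrix n n R) (S : Matrix m n R) :
    Submodule R (Matrix m n R) :=
  Submodule.span R {M | ∃ i j : ℕ, M = A ^ i * S * B ^ j}

variable {A : Matrix m m R} {B : Matrix n n R} {S T : Matrix m n R}

theorem self_mem_bicyclicSpan : S ∈ bicyclicSpan A B S :=
  Submodule.subset_span ⟨0, 0, by simp⟩

theorem mul_mem_bicyclicSpan_left (hT : T ∈ bicyclicSpan A B S) :
    A * T ∈ bicyclicSpan A B S := by
  refine (Submodule.span_le (p := (bicyclicSpan A B S).comap (mulLeftLinearMap n R A))).2 ?_ hT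
  rintro _ ⟨i, j, rfl⟩
  exact Submodule.subset_span ⟨i + 1, j, by simp [pow_succ', Matrix.mul_assoc]⟩

theorem mul_mem_bicyclicSpan_right (hT : T ∈ bicyclicSpan A B S) :
    T * B ∈ bicyclicSpan A B S := by
  refine (Submodule.span_le (p := (bicyclicSpan A B S).comap (mulRightLinearMap m R B))).2 ?_ hT
  rintro _ ⟨i, j, rfl⟩
  exact Submodule.subset_span ⟨i, j + 1, by simp [pow_succ, Matrix.mul_assoc]⟩

theorem bicyclicSpan_le {W : Submodule R (Matrix m n R)} (hS : S ∈ W)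
    (hA : ∀ T ∈ W, A * T ∈ W) (hB : ∀ T ∈ W, T * B ∈ W) : bicyclicSpan A B S ≤ W := by
  have hAi (i : ℕ) : A ^ i * S ∈ W := by
    induction i with
    | zero => simpa
    | succ i ih => simpa [pow_succ', Matrix.mul_assoc] using hA _ ih
  have hBj (i j : ℕ) : A ^ i * S * B ^ j ∈ W := by
    induction j with
    | zero => simpa using hAi i
    | succ j ih => simpa [pow_succ, Matrix.mul_assoc] using hB _ ih
  refine Submodule.span_le.2 ?_
  rintro _ ⟨i, j, rfl⟩
  exact hBj i j

theorem exists_eq_algebraMap_of_forall_mul_eq_mul [Nonempty n] {X : Matrix m m R}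
    {Y : Matrix n n R} (h : ∀ T : Matrix m n R, X * T = T * Y) :
    ∃ c, X = algebraMap R (Matrix m m R) c := by
  obtain ⟨j⟩ := ‹Nonempty n›
  refine ⟨Y j j, ext fun i k => ?_⟩
  have hik := congr_fun₂ (h (single k j 1)) i j
  rw [mul_single_apply_same, mul_one] at hik
  rw [hik, algebraMap_matrix_apply]
  by_cases hi : i = k
  · subst hi
    simp [single_mul_apply_same]
  · simp [single_mul_apply_of_ne (1 : R) k j i j hi, hi]

end

section

variable {F : Type*} [Field F] {m n : Type*} [Fintype m] [Fintype n] [DecidableEq m]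
  [DecidableEq n] {A : Matrix m m F} {B : Matrix n n F}

theorem bicyclicSpan_eq_top_of_coprime (hA : Irreducible A.charpoly)
    (hB : Irreducible B.charpoly) (hmn : (Fintype.card m).Coprime (Fintype.card n))
    {S : Matrix m n F} (hS : S ≠ 0) : bicyclicSpan A B S = ⊤ := by
  set V := bicyclicSpan A B S
  have hdvdm : Fintype.card m ∣ finrank F V := by
    rw [← A.charpoly_natDegree_eq_dim]
    have hAV : ∀ T ∈ V, mulLeftLinearMap n F A T ∈ V := fun _ => mul_mem_bicyclicSpan_left
    refine natDegree_dvd_finrank_of_aeval_eq_zero hA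
      (f := (mulLeftLinearMap n F A).restrict hAV) ?_
    refine LinearMap.ext fun T => Subtype.ext ?_
    simp [LinearMap.aeval_restrict_apply, aeval_mulLeftLinearMap_apply, aeval_self_charpoly]
  have hdvdn : Fintype.card n ∣ finrank F V := by
    rw [← B.charpoly_natDegree_eq_dim]
    have hBV : ∀ T ∈ V, mulRightLinearMap m F B T ∈ V := fun _ => mul_mem_bicyclicSpan_right
    refine natDegree_dvd_finrank_of_aeval_eq_zero hB
      (f := (mulRightLinearMap m F B).restrict hBV) ?_
    refine LinearMap.ext fun T => Subtype.ext ?_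
    simp [LinearMap.aeval_restrict_apply, aeval_mulRightLinearMap_apply, aeval_self_charpoly]
  have hV : finrank F V ≠ 0 := by
    rw [Ne, Submodule.finrank_eq_zero]
    exact fun h => hS ((Submodule.mem_bot F).1 (h ▸ self_mem_bicyclicSpan))
  refine Submodule.eq_top_of_finrank_eq (le_antisymm (Submodule.finrank_le V) ?_)
  rw [Module.finrank_matrix, Module.finrank_self, mul_one]
  exact Nat.le_of_dvd (Nat.pos_of_ne_zero hV) (hmn.mul_dvd_of_dvd_of_dvd hdvdm hdvdn)

theorem exists_algHom_commute_of_finrank_dvd [Finite F] (hA : Irreducible A.charpoly)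
    (L : Type*) [Field L] [Algebra F L] (hL : finrank F L ∣ Fintype.card m) :
    ∃ ψ : L →ₐ[F] Matrix m m F, ∀ x, Commute A (ψ x) := by
  have : Fact (Irreducible A.charpoly) := ⟨hA⟩
  have : Module.Finite F (AdjoinRoot A.charpoly) := A.charpoly_monic.finite_adjoinRoot
  have : Finite (AdjoinRoot A.charpoly) := Module.finite_of_finite F
  obtain ⟨ι⟩ := FiniteField.nonempty_algHom_of_finrank_dvd
    (K := L) (L := AdjoinRoot A.charpoly)
    (by rwa [AdjoinRoot.finrank_eq_natDegree, charpoly_natDegree_eq_dim])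
  exact ⟨(AdjoinRoot.aevalHom A.aeval_self_charpoly).comp ι,
    fun _ => AdjoinRoot.commute_aevalHom A.aeval_self_charpoly _⟩

theorem exists_ne_zero_forall_mul_eq_mul_of_algHom [Nonempty m] [Nonempty n] {K : Type*}
    [Field K] [Algebra F K] (ψ : K →ₐ[F] Matrix m m F) (χ : K →ₐ[F] Matrix n n F) :
    ∃ S : Matrix m n F, S ≠ 0 ∧ ∀ x, ψ x * S = S * χ x := by
  obtain ⟨T, hT, hTψχ⟩ := exists_ne_zero_forall_comp_eq_comp_of_algHom
    (toLinAlgEquiv'.toAlgHom.comp ψ) (toLinAlgEquiv'.toAlgHom.comp χ)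
  refine ⟨LinearMap.toMatrix' T, by simpa using hT, fun x => toLin'.injective ?_⟩
  rw [toLin'_mul, toLin'_mul, toLin'_toMatrix']
  exact hTψχ x

theorem exists_bicyclicSpan_ne_top_of_not_coprime [Finite F] [Nonempty m] [Nonempty n]
    (hA : Irreducible A.charpoly) (hB : Irreducible B.charpoly)
    (hmn : ¬(Fintype.card m).Coprime (Fintype.card n)) :
    ∃ S : Matrix m n F, S ≠ 0 ∧ bicyclicSpan A B S ≠ ⊤ := by
  set d := (Fintype.card m).gcd (Fintype.card n)
  obtain ⟨p, _⟩ := CharP.exists F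
  have : Fact p.Prime := ⟨CharP.char_is_prime F p⟩
  have : NeZero d := ⟨(Nat.gcd_pos_of_pos_left _ Fintype.card_pos).ne'⟩
  let L := FiniteField.Extension F p d
  have hL : finrank F L = d := FiniteField.finrank_extension F p d
  obtain ⟨ψ, hψ⟩ := exists_algHom_commute_of_finrank_dvd hA L <| by
    rw [hL]; exact Nat.gcd_dvd_left ..
  obtain ⟨χ, hχ⟩ := exists_algHom_commute_of_finrank_dvd hB L <| by
    rw [hL]; exact Nat.gcd_dvd_right ..
  obtain ⟨S, hS, hψχ⟩ := exists_ne_zero_forall_mul_eq_mul_of_algHom ψ χ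
  refine ⟨S, hS, fun htop => hmn ?_⟩
  -- `V_{A,B;S} = ⊤` forces every `ψ x` to be a scalar matrix, i.e. `L = F`.
  have hbot : (⊥ : Subalgebra F L) = ⊤ := by
    refine eq_top_iff.2 fun x _ => ?_
    have hW : bicyclicSpan A B S ≤
        LinearMap.eqLocus (mulLeftLinearMap n F (ψ x)) (mulRightLinearMap m F (χ x)) := by
      refine bicyclicSpan_le (hψχ x) (fun T hT => ?_) (fun T hT => ?_) <;>
        simp only [LinearMap.mem_eqLocus, mulLeftLinearMap_apply, mulRightLinearMap_apply] at hT ⊢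
      · rw [← Matrix.mul_assoc, ← (hψ x).eq, Matrix.mul_assoc, hT, Matrix.mul_assoc]
      · rw [← Matrix.mul_assoc, hT, Matrix.mul_assoc, ← (hχ x).eq, Matrix.mul_assoc]
    obtain ⟨c, hc⟩ := exists_eq_algebraMap_of_forall_mul_eq_mul (X := ψ x) (Y := χ x)
      fun T => hW (htop ▸ Submodule.mem_top)
    exact ⟨c, ψ.toRingHom.injective (by simp [hc])⟩
  rwa [Subalgebra.bot_eq_top_iff_finrank_eq_one, hL] at hbot

end

end Matrix

/-- Over a finite field, if A and B have irreducible characteristic polynomials,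
then {A^i S B^j} spans the whole matrix space for every nonzero S
iff gcd(m,n) = 1. -/
theorem span_eq_top_forall_S_iff_gcd_eq_one
    {F : Type*} [Field F] [Fintype F] {m n : ℕ} (hm : 0 < m) (hn : 0 < n)
    (A : Matrix (Fin m) (Fin m) F) (B : Matrix (Fin n) (Fin n) F)
    (hA : Irreducible A.charpoly) (hB : Irreducible B.charpoly) :
    (∀ S : Matrix (Fin m) (Fin n) F, S ≠ 0 →
        Submodule.span F
          {M : Matrix (Fin m) (Fin n) F | ∃ i j : ℕ, M = A ^ i * S * B ^ j} = ⊤) ↔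
      Nat.gcd m n = 1 := by
  have : Nonempty (Fin m) := Fin.pos_iff_nonempty.mp hm
  have : Nonempty (Fin n) := Fin.pos_iff_nonempty.mp hn
  refine ⟨fun h => ?_, fun hmn S hS => ?_⟩
  · by_contra hmn
    obtain ⟨S, hS, hspan⟩ :=
      exists_bicyclicSpan_ne_top_of_not_coprime hA hB (by simpa using hmn)
    exact hspan (h S hS)
  · exact bicyclicSpan_eq_top_of_coprime hA hB (by simpa using hmn) hS
end

section
/- Let F = F_q be a finite field with q elements, A ∈ F^{m×m}, B ∈ F^{n×n}, and S ∈ F^{m×n}, and suppose that the F-linear span of {A^i S B^j : i, j ≥ 0} equals F^{m×n}. Then for any integers 0 ≤ h ≤ m and 0 ≤ k ≤ n, the set M^{h,k}_{A,B;S} = { p(A) S r(B) : p, r ∈ F[s], deg p < h, deg r < k } has cardinality (q^h − 1)(q^k − 1)/(q − 1) + 1. -/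
/-!
Write `q = |F|`. By Cayley–Hamilton every `A^i` is a combination of `A^0, …, A^(m-1)` and
likewise for `B`, so the `mn` matrices `A^i S B^j` with `i < m`, `j < n` span `F^{m×n}` and
hence form a basis. For coefficient vectors `c ∈ F^h`, `d ∈ F^k` the matrix
`(∑ cᵢ Aⁱ) S (∑ dⱼ Bʲ)` is the image of the outer product `c dᵀ` under the injective linear map
`X ↦ ∑ Xᵢⱼ Aⁱ S Bʲ`, so the set has as many elements as there are `h × k` outer products.
Besides `0`, these are hit exactly by the `(q^h - 1)(q^k - 1)` pairs of nonzero vectors, and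
`c dᵀ = c' d'ᵀ` iff `(c', d') = (u c, u⁻¹ d)` for a unit `u`, so every fibre has `q - 1` elements.
-/

open Finset Matrix Polynomial

section VecMulVec

variable {F ι κ : Type*}

theorem vecMulVec_eq_zero_iff [MulZeroClass F] [NoZeroDivisors F] {c : ι → F} {d : κ → F} :
    vecMulVec c d = 0 ↔ c = 0 ∨ d = 0 := by
  simp only [← ext_iff, vecMulVec_apply, Matrix.zero_apply, mul_eq_zero, funext_iff,
    Pi.zero_apply, forall_or_left, forall_or_right]

variable [Field F]

theorem vecMulVec_eq_vecMulVec_iff {c c' : ι → F} {d d' : κ → F} (hc : c ≠ 0) (hd : d ≠ 0) :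
    vecMulVec c' d' = vecMulVec c d ↔ ∃ u : Fˣ, c' = u • c ∧ d' = u⁻¹ • d := by
  constructor
  · intro h
    have hcd : ∀ i j, c' i * d' j = c i * d j := fun i j => by
      simpa [vecMulVec_apply] using congrFun (congrFun h i) j
    obtain ⟨i₀, hi₀⟩ : ∃ i, c i ≠ 0 := Function.ne_iff.mp hc
    obtain ⟨j₀, hj₀⟩ : ∃ j, d j ≠ 0 := Function.ne_iff.mp hd
    have hc'd' : c' i₀ * d' j₀ ≠ 0 := by rw [hcd]; exact mul_ne_zero hi₀ hj₀
    have hc'₀ : c' i₀ ≠ 0 := left_ne_zero_of_mul hc'd'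
    have hd'₀ : d' j₀ ≠ 0 := right_ne_zero_of_mul hc'd'
    refine ⟨Units.mk0 (d j₀ / d' j₀) (div_ne_zero hj₀ hd'₀), funext fun i => ?_,
      funext fun j => ?_⟩
    · simp only [Pi.smul_apply, Units.smul_def, Units.val_mk0, smul_eq_mul]
      field_simp
      linear_combination hcd i j₀
    · have hcross : d' j * d j₀ = d' j₀ * d j :=
        mul_left_cancel₀ hc'₀ (by linear_combination d j₀ * hcd i₀ j - d j * hcd i₀ j₀)
      simp only [Pi.smul_apply, Units.smul_def, Units.val_inv_eq_inv_val, Units.val_mk0,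
        smul_eq_mul]
      field_simp
      linear_combination hcross
  · rintro ⟨u, rfl, rfl⟩
    rw [smul_vecMulVec, vecMulVec_smul, smul_inv_smul]

variable [Fintype F] [Fintype ι] [Fintype κ]

theorem card_filter_vecMulVec_eq [DecidableEq F] [DecidableEq ι] [DecidableEq κ]
    {c : ι → F} {d : κ → F} (hc : c ≠ 0) (hd : d ≠ 0) :
    #{cd ∈ ({0}ᶜ ×ˢ {0}ᶜ : Finset ((ι → F) × (κ → F))) |
      vecMulVec cd.1 cd.2 = vecMulVec c d} = Fintype.card F - 1 := by
  set g : Fˣ → (ι → F) × (κ → F) := fun u => (u • c, u⁻¹ • d)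
  obtain ⟨i₀, hi₀⟩ : ∃ i, c i ≠ 0 := Function.ne_iff.mp hc
  have hg : Function.Injective g := fun u v huv =>
    Units.ext <| mul_right_cancel₀ hi₀ <| by
      simpa [g, Units.smul_def] using congrFun (congrArg Prod.fst huv) i₀
  have hfibre : {cd ∈ ({0}ᶜ ×ˢ {0}ᶜ : Finset ((ι → F) × (κ → F))) |
      vecMulVec cd.1 cd.2 = vecMulVec c d} = univ.image g := by
    ext ⟨c', d'⟩
    simp only [vecMulVec_eq_vecMulVec_iff hc hd, mem_filter, mem_product, mem_compl,
      mem_singleton, mem_image, mem_univ, Prod.mk.injEq, true_and, g]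
    constructor
    · rintro ⟨-, u, rfl, rfl⟩
      exact ⟨u, rfl, rfl⟩
    · rintro ⟨u, rfl, rfl⟩
      exact ⟨⟨(smul_ne_zero_iff_ne u).mpr hc, (smul_ne_zero_iff_ne _).mpr hd⟩, u, rfl, rfl⟩
  rw [hfibre, card_image_of_injective _ hg, card_univ, Fintype.card_units]

theorem card_range_vecMulVec :
    Nat.card (Set.range fun cd : (ι → F) × (κ → F) => vecMulVec cd.1 cd.2) =
      (Fintype.card F ^ Fintype.card ι - 1) * (Fintype.card F ^ Fintype.card κ - 1) /
        (Fintype.card F - 1) + 1 := by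
  classical
  set f := fun cd : (ι → F) × (κ → F) => vecMulVec cd.1 cd.2
  set s : Finset ((ι → F) × (κ → F)) := {0}ᶜ ×ˢ {0}ᶜ
  have hrange : Set.range f = ↑(insert 0 (s.image f)) := by
    ext M
    simp only [Set.mem_range, coe_insert, Set.mem_insert_iff, mem_coe, mem_image]
    constructor
    · rintro ⟨⟨c, d⟩, rfl⟩
      by_cases h : c = 0 ∨ d = 0
      · exact Or.inl (vecMulVec_eq_zero_iff.mpr h)
      · exact Or.inr ⟨(c, d), by simpa [s] using h, rfl⟩
    · rintro (rfl | ⟨cd, -, rfl⟩)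
      · exact ⟨0, zero_vecMulVec 0⟩
      · exact ⟨cd, rfl⟩
  have hzero : (0 : Matrix ι κ F) ∉ s.image f := by
    simp [f, s, vecMulVec_eq_zero_iff]
  have hcount : #(s.image f) * (Fintype.card F - 1) =
      (Fintype.card F ^ Fintype.card ι - 1) * (Fintype.card F ^ Fintype.card κ - 1) := by
    rw [← sum_const_nat fun b hb => ?_, ← card_eq_sum_card_image]
    · simp [s, card_compl]
    · obtain ⟨⟨c, d⟩, hcd, rfl⟩ := mem_image.mp hb
      simp only [s, mem_product, mem_compl, mem_singleton] at hcd
      exact card_filter_vecMulVec_eq hcd.1 hcd.2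
  have hq : 0 < Fintype.card F - 1 := Nat.sub_pos_of_lt Fintype.one_lt_card
  rw [hrange, Nat.card_coe_set_eq, Set.ncard_coe_finset, card_insert_of_notMem hzero, ← hcount,
    Nat.mul_div_cancel _ hq]

end VecMulVec

section SumSmul

variable {R ι κ l m n p : Type*} [CommSemiring R] [Fintype ι] [Fintype κ] [Fintype m]
  [Fintype n]

theorem sum_smul_mul_mul_sum_smul (f : ι → Matrix l m R) (S : Matrix m n R)
    (g : κ → Matrix n p R) (c : ι → R) (d : κ → R) :
    (∑ i, c i • f i) * S * ∑ j, d j • g j =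
      ∑ ij : ι × κ, (c ij.1 * d ij.2) • (f ij.1 * S * g ij.2) := by
  simp only [Matrix.sum_mul, Matrix.mul_sum, Matrix.smul_mul, Matrix.mul_smul, Finset.smul_sum,
    smul_smul]
  rw [Fintype.sum_prod_type, Finset.sum_comm]
  simp only [mul_comm]

theorem card_range_sum_smul_mul_mul_sum_smul (f : ι → Matrix l m R) (S : Matrix m n R)
    (g : κ → Matrix n p R) (hli : LinearIndependent R fun ij : ι × κ => f ij.1 * S * g ij.2) :
    Nat.card (Set.range fun cd : (ι → R) × (κ → R) =>
        (∑ i, cd.1 i • f i) * S * ∑ j, cd.2 j • g j) =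
      Nat.card (Set.range fun cd : (ι → R) × (κ → R) => vecMulVec cd.1 cd.2) := by
  have hinj : Function.Injective fun X : Matrix ι κ R =>
      Fintype.linearCombination R (fun ij : ι × κ => f ij.1 * S * g ij.2) (Function.uncurry X) :=
    (linearIndependent_iff_injective_fintypeLinearCombination.mp hli).comp
      Function.uncurry_injective
  rw [← Nat.card_image_of_injective hinj, ← Set.range_comp]
  congr! with cd
  simp only [Function.comp_apply, sum_smul_mul_mul_sum_smul, Fintype.linearCombination_apply]
  rfl

end SumSmul

theorem pow_mem_span_pow_lt {R n : Type*} [CommRing R] [Nontrivial R] [Fintype n]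
    [DecidableEq n] (A : Matrix n n R) {m : ℕ} (hm : Fintype.card n ≤ m) (i : ℕ) :
    A ^ i ∈ Submodule.span R (Set.range fun j : Fin m => A ^ (j : ℕ)) :=
  PowerBasis.mem_span_pow'.mpr ⟨X ^ i %ₘ A.charpoly,
    (degree_modByMonic_lt _ A.charpoly_monic).trans_le
      (A.charpoly_degree_eq_dim ▸ by exact_mod_cast hm),
    by rw [aeval_modByMonic_eq_self_of_root A.aeval_self_charpoly, aeval_X_pow]⟩

theorem exists_degree_lt_aeval_eq_iff {R S : Type*} [CommRing R] [Ring S] [Algebra R S]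
    (x y : S) (d : ℕ) :
    (∃ p : R[X], p.degree < d ∧ aeval x p = y) ↔
      ∃ c : Fin d → R, ∑ i, c i • x ^ (i : ℕ) = y := by
  rw [← Submodule.mem_span_range_iff_exists_fun, PowerBasis.mem_span_pow']
  simp only [eq_comm]

theorem setOf_aeval_mul_mul_aeval_eq_range {R l n : Type*} [CommRing R] [Fintype l]
    [DecidableEq l] [Fintype n] [DecidableEq n] (A : Matrix l l R) (B : Matrix n n R)
    (S : Matrix l n R) (h k : ℕ) :
    {M | ∃ p r : R[X], p.degree < h ∧ r.degree < k ∧ M = aeval A p * S * aeval B r} =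
      Set.range fun cd : (Fin h → R) × (Fin k → R) =>
        (∑ i, cd.1 i • A ^ (i : ℕ)) * S * ∑ j, cd.2 j • B ^ (j : ℕ) := by
  ext M
  constructor
  · rintro ⟨p, r, hp, hr, rfl⟩
    obtain ⟨c, hc⟩ := (exists_degree_lt_aeval_eq_iff A _ h).mp ⟨p, hp, rfl⟩
    obtain ⟨d, hd⟩ := (exists_degree_lt_aeval_eq_iff B _ k).mp ⟨r, hr, rfl⟩
    exact ⟨(c, d), by rw [← hc, ← hd]⟩
  · rintro ⟨⟨c, d⟩, rfl⟩
    obtain ⟨p, hp, hpc⟩ := (exists_degree_lt_aeval_eq_iff A _ h).mpr ⟨c, rfl⟩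
    obtain ⟨r, hr, hrd⟩ := (exists_degree_lt_aeval_eq_iff B _ k).mpr ⟨d, rfl⟩
    exact ⟨p, r, hp, hr, by rw [hpc, hrd]⟩

theorem linearIndependent_pow_mul_mul_pow {F : Type*} [Field F] {m n : ℕ}
    (A : Matrix (Fin m) (Fin m) F) (B : Matrix (Fin n) (Fin n) F) (S : Matrix (Fin m) (Fin n) F)
    (hspan : Submodule.span F
      {M : Matrix (Fin m) (Fin n) F | ∃ i j : ℕ, M = A ^ i * S * B ^ j} = ⊤) :
    LinearIndependent F fun ij : Fin m × Fin n => A ^ (ij.1 : ℕ) * S * B ^ (ij.2 : ℕ) := by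
  refine linearIndependent_of_top_le_span_of_card_eq_finrank ?_ (by simp [Module.finrank_matrix])
  rw [← hspan, Submodule.span_le]
  rintro _ ⟨i, j, rfl⟩
  obtain ⟨c, hc⟩ := (Submodule.mem_span_range_iff_exists_fun F).mp
    (pow_mem_span_pow_lt A (Fintype.card_fin m).le i)
  obtain ⟨d, hd⟩ := (Submodule.mem_span_range_iff_exists_fun F).mp
    (pow_mem_span_pow_lt B (Fintype.card_fin n).le j)
  rw [SetLike.mem_coe, ← hc, ← hd, sum_smul_mul_mul_sum_smul]
  exact Submodule.sum_mem _ fun ij _ => Submodule.smul_mem _ _ (Submodule.subset_span ⟨ij, rfl⟩)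

/-- If {A^i S B^j} spans the whole matrix space over the finite field F with q
elements, then for 0 ≤ h ≤ m and 0 ≤ k ≤ n the set P^h[A] S P^k[B] has
cardinality (q^h − 1)(q^k − 1)/(q − 1) + 1. -/
theorem card_poly_sandwich
    {F : Type*} [Field F] [Fintype F] {m n : ℕ}
    (A : Matrix (Fin m) (Fin m) F) (B : Matrix (Fin n) (Fin n) F)
    (S : Matrix (Fin m) (Fin n) F)
    (hspan : Submodule.span F
      {M : Matrix (Fin m) (Fin n) F | ∃ i j : ℕ, M = A ^ i * S * B ^ j} = ⊤)
    (h k : ℕ) (hh : h ≤ m) (hk : k ≤ n) :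
    Nat.card {M : Matrix (Fin m) (Fin n) F | ∃ p r : Polynomial F,
        p.degree < (h : ℕ) ∧ r.degree < (k : ℕ) ∧
        M = (Polynomial.aeval A p) * S * (Polynomial.aeval B r)} =
      (Fintype.card F ^ h - 1) * (Fintype.card F ^ k - 1) / (Fintype.card F - 1) + 1 := by
  have hli : LinearIndependent F fun ij : Fin h × Fin k => A ^ (ij.1 : ℕ) * S * B ^ (ij.2 : ℕ) :=
    (linearIndependent_pow_mul_mul_pow A B S hspan).comp
      (Prod.map (Fin.castLE hh) (Fin.castLE hk))
      ((Fin.castLE_injective hh).prodMap (Fin.castLE_injective hk))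
  rw [setOf_aeval_mul_mul_aeval_eq_range,
    card_range_sum_smul_mul_mul_sum_smul (fun i : Fin h => A ^ (i : ℕ)) S
      (fun j : Fin k => B ^ (j : ℕ)) hli,
    card_range_vecMulVec, Fintype.card_fin, Fintype.card_fin]
end

section
/- Let F = F_q be a finite field, A ∈ F^{m×m}, B ∈ F^{n×n}, S ∈ F^{m×n}, with the F-linear span of {A^i S B^j : i, j ≥ 0} equal to F^{m×n}. For 0 ≤ h ≤ m and 0 ≤ k ≤ n, let F^{h;m} = { x ∈ F^m : x_i = 0 for all h ≤ i < m } and F^{k;n} = { y ∈ F^n : y_j = 0 for all k ≤ j < n }, and let Φ^{h,k} = { x y^T : x ∈ F^{h;m}, y ∈ F^{k;n} } ⊆ F^{m×n}. Then the set M^{h,k}_{A,B;S} = { p(A) S r(B) : p, r ∈ F[s], deg p < h, deg r < k } has the same cardinality as Φ^{h,k}. -/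
open Matrix Polynomial

section Aux

variable {F : Type*} [Field F] {m n : ℕ}

/-- The spanning linear map sending a coefficient matrix `Z` to `∑ Zᵢⱼ AⁱSBʲ`. -/
noncomputable def psiMap (A : Matrix (Fin m) (Fin m) F) (B : Matrix (Fin n) (Fin n) F)
    (S : Matrix (Fin m) (Fin n) F) :
    Matrix (Fin m) (Fin n) F →ₗ[F] Matrix (Fin m) (Fin n) F where
  toFun Z := ∑ i : Fin m, ∑ j : Fin n, Z i j • (A ^ (i : ℕ) * S * B ^ (j : ℕ))
  map_add' Z W := by
    simp [Matrix.add_apply, add_smul, Finset.sum_add_distrib]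
  map_smul' c Z := by
    simp [Matrix.smul_apply, smul_smul, Finset.smul_sum]

lemma aeval_eq_sum_fin (A : Matrix (Fin m) (Fin m) F) (p : F[X])
    (hp : p.degree < (m : ℕ)) :
    aeval A p = ∑ i : Fin m, p.coeff i • A ^ (i : ℕ) := by
  by_cases h0 : p = 0
  · simp [h0]
  · have hnat : p.natDegree < m := (Polynomial.natDegree_lt_iff_degree_lt h0).2 hp
    rw [Polynomial.aeval_eq_sum_range' hnat A, ← Fin.sum_univ_eq_sum_range]

lemma psiMap_vecMulVec (A : Matrix (Fin m) (Fin m) F) (B : Matrix (Fin n) (Fin n) F)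
    (S : Matrix (Fin m) (Fin n) F) (x : Fin m → F) (y : Fin n → F) :
    psiMap A B S (vecMulVec x y) =
      (∑ i : Fin m, x i • A ^ (i : ℕ)) * S * (∑ j : Fin n, y j • B ^ (j : ℕ)) := by
  simp only [psiMap, LinearMap.coe_mk, AddHom.coe_mk, Matrix.vecMulVec_apply]
  rw [Matrix.sum_mul, Matrix.sum_mul]
  refine Finset.sum_congr rfl fun i _ => ?_
  rw [Matrix.mul_sum]
  refine Finset.sum_congr rfl fun j _ => ?_
  rw [Matrix.smul_mul, Matrix.smul_mul, Matrix.mul_smul, smul_smul]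

/-- A polynomial with coefficients given by a vector supported below `h`. -/
noncomputable def polyOf (x : Fin m → F) : F[X] :=
  ∑ i : Fin m, Polynomial.C (x i) * Polynomial.X ^ (i : ℕ)

lemma polyOf_degree_lt {h : ℕ} (x : Fin m → F) (hx : ∀ i : Fin m, h ≤ (i : ℕ) → x i = 0) :
    (polyOf x).degree < (h : ℕ) := by
  unfold polyOf
  refine lt_of_le_of_lt (Polynomial.degree_sum_le _ _) ?_
  rw [Finset.sup_lt_iff (by exact_mod_cast WithBot.bot_lt_coe h)]
  intro i _
  by_cases hxi : x i = 0
  · simpa [hxi] using (by exact_mod_cast WithBot.bot_lt_coe h : (⊥ : WithBot ℕ) < (h : ℕ))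
  · have hih : (i : ℕ) < h := by
      by_contra hc
      exact hxi (hx i (le_of_not_gt hc))
    refine lt_of_le_of_lt (Polynomial.degree_C_mul_X_pow_le (i : ℕ) (x i)) ?_
    exact_mod_cast hih

lemma aeval_polyOf (A : Matrix (Fin m) (Fin m) F) (x : Fin m → F) :
    aeval A (polyOf x) = ∑ i : Fin m, x i • A ^ (i : ℕ) := by
  unfold polyOf
  simp [Algebra.smul_def]

end Aux

/-- If {A^i S B^j} spans the whole matrix space over a finite field, then
P^h[A] S P^k[B] has the same cardinality as the set Φ^{h,k} of outer products
x yᵀ with x supported on the first h coordinates and y on the first k. -/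
theorem card_poly_sandwich_eq_card_outer
    {F : Type*} [Field F] [Fintype F] {m n : ℕ}
    (A : Matrix (Fin m) (Fin m) F) (B : Matrix (Fin n) (Fin n) F)
    (S : Matrix (Fin m) (Fin n) F)
    (hspan : Submodule.span F
      {M : Matrix (Fin m) (Fin n) F | ∃ i j : ℕ, M = A ^ i * S * B ^ j} = ⊤)
    (h k : ℕ) (hh : h ≤ m) (hk : k ≤ n) :
    Nat.card {M : Matrix (Fin m) (Fin n) F | ∃ p r : Polynomial F,
        p.degree < (h : ℕ) ∧ r.degree < (k : ℕ) ∧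
        M = (Polynomial.aeval A p) * S * (Polynomial.aeval B r)} =
      Nat.card {M : Matrix (Fin m) (Fin n) F | ∃ (x : Fin m → F) (y : Fin n → F),
        (∀ i : Fin m, h ≤ (i : ℕ) → x i = 0) ∧ (∀ j : Fin n, k ≤ (j : ℕ) → y j = 0) ∧
        M = Matrix.vecMulVec x y} := by
  set ψ := psiMap A B S with hψ
  -- ψ is surjective
  have hsurj : Function.Surjective ψ := by
    rw [← LinearMap.range_eq_top]
    rw [eq_top_iff, ← hspan, Submodule.span_le]
    rintro M ⟨i, j, rfl⟩
    refine ⟨vecMulVec (fun i' => (X ^ i %ₘ A.charpoly).coeff i')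
        (fun j' => (X ^ j %ₘ B.charpoly).coeff j'), ?_⟩
    have hdA : (X ^ i %ₘ A.charpoly).degree < (m : ℕ) := by
      have := Polynomial.degree_modByMonic_lt (X ^ i) A.charpoly_monic
      rwa [A.charpoly_degree_eq_dim, Fintype.card_fin] at this
    have hdB : (X ^ j %ₘ B.charpoly).degree < (n : ℕ) := by
      have := Polynomial.degree_modByMonic_lt (X ^ j) B.charpoly_monic
      rwa [B.charpoly_degree_eq_dim, Fintype.card_fin] at this
    rw [hψ, psiMap_vecMulVec, ← aeval_eq_sum_fin A _ hdA, ← aeval_eq_sum_fin B _ hdB,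
      ← Matrix.pow_eq_aeval_mod_charpoly, ← Matrix.pow_eq_aeval_mod_charpoly]
  have hinj : Function.Injective ψ :=
    (LinearMap.injective_iff_surjective).2 hsurj
  -- the polynomial set is the image under ψ of the outer-product set
  have himg : {M : Matrix (Fin m) (Fin n) F | ∃ p r : Polynomial F,
        p.degree < (h : ℕ) ∧ r.degree < (k : ℕ) ∧
        M = (Polynomial.aeval A p) * S * (Polynomial.aeval B r)} =
      ψ '' {M : Matrix (Fin m) (Fin n) F | ∃ (x : Fin m → F) (y : Fin n → F),
        (∀ i : Fin m, h ≤ (i : ℕ) → x i = 0) ∧ (∀ j : Fin n, k ≤ (j : ℕ) → y j = 0) ∧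
        M = Matrix.vecMulVec x y} := by
    ext M
    constructor
    · rintro ⟨p, r, hp, hr, rfl⟩
      refine ⟨vecMulVec (fun i => p.coeff i) (fun j => r.coeff j),
        ⟨fun i => p.coeff i, fun j => r.coeff j, ?_, ?_, rfl⟩, ?_⟩
      · intro i hi
        exact Polynomial.coeff_eq_zero_of_degree_lt
          (lt_of_lt_of_le hp (by exact_mod_cast hi))
      · intro j hj
        exact Polynomial.coeff_eq_zero_of_degree_lt
          (lt_of_lt_of_le hr (by exact_mod_cast hj))
      · rw [hψ, psiMap_vecMulVec,
          ← aeval_eq_sum_fin A p (lt_of_lt_of_le hp (by exact_mod_cast hh)),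
          ← aeval_eq_sum_fin B r (lt_of_lt_of_le hr (by exact_mod_cast hk))]
    · rintro ⟨_, ⟨x, y, hx, hy, rfl⟩, rfl⟩
      refine ⟨polyOf x, polyOf y, polyOf_degree_lt x hx, polyOf_degree_lt y hy, ?_⟩
      rw [hψ, psiMap_vecMulVec, aeval_polyOf, aeval_polyOf]
  rw [himg, Nat.card_image_of_injective hinj]
end
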